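/- arXiv:2502.16521 — 3 statements merged into one kernel-verified Lean document; each statement's English description precedes it below -/
import Mathlib

section
/- (i) If −A generates a bounded analytic semigroup on a Banach space X and A has L^1-maximal regularity on ℝ_+, then A has L^1_v-maximal regularity on ℝ_+ for every non-increasing weight v on (0,∞). (ii) If −A generates an analytic semigroup T on a Banach space X, v is a non-decreasing weight on (0,∞) with v(t) → 0 as t → 0+, and there is a constant C such that ∫_0^∞ ‖AT(t)x‖_X v(t+s) dt ≤ C‖x‖_X v(s) for every Lebesgue point s of v and every x ∈ X, then Ax = 0 for all x ∈ D(A). -/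
open MeasureTheory Set Filter ENNReal NNReal

noncomputable section

variable {X : Type*} [NormedAddCommGroup X] [NormedSpace ℂ X] [CompleteSpace X]

/-- A semigroup on a Banach space `X` (in the sense of Arendt–Batty–Hieber–Neubrander):
a strongly continuous map `T : (0,∞) → L(X)` satisfying the semigroup law, bounded
near `0`, and nondegenerate. -/
structure IsSemigroup (T : ℝ → X →L[ℂ] X) : Prop where
  comp : ∀ s t : ℝ, 0 < s → 0 < t → T (s + t) = (T s).comp (T t)
  strongCont : ∀ x : X, ContinuousOn (fun t => T t x) (Ioi (0:ℝ))
  boundedNearZero : ∃ M : ℝ, ∀ t ∈ Ioo (0:ℝ) 1, ‖T t‖ ≤ M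
  nondegenerate : ∀ x : X, (∀ t : ℝ, 0 < t → T t x = 0) → x = 0

/-- `-A` (a closed linear operator with domain `D` and action `A`) is the generator of
the semigroup `T`: for all sufficiently large `λ > ω`, `(λ + A)⁻¹` exists and is given
by the Laplace transform `(λ + A)⁻¹ x = ∫_0^∞ e^{-λ t} T(t) x dt`. -/
structure IsGenerator (T : ℝ → X →L[ℂ] X) (D : Set X) (A : X → X) : Prop where
  isSemigroup : IsSemigroup T
  add_mem : ∀ x ∈ D, ∀ y ∈ D, x + y ∈ D
  smul_mem : ∀ (c : ℂ), ∀ x ∈ D, c • x ∈ D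
  map_add : ∀ x ∈ D, ∀ y ∈ D, A (x + y) = A x + A y
  map_smul : ∀ (c : ℂ), ∀ x ∈ D, A (c • x) = c • A x
  laplace : ∃ ω : ℝ, ∀ lam : ℝ, ω < lam →
    (∀ x : X, IntegrableOn (fun t : ℝ => Real.exp (-lam * t) • T t x) (Ioi 0)) ∧
    (∀ x : X, (∫ t in Ioi (0:ℝ), Real.exp (-lam * t) • T t x) ∈ D) ∧
    (∀ x : X, lam • (∫ t in Ioi (0:ℝ), Real.exp (-lam * t) • T t x)
        + A (∫ t in Ioi (0:ℝ), Real.exp (-lam * t) • T t x) = x) ∧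
    (∀ y ∈ D, (∫ t in Ioi (0:ℝ), Real.exp (-lam * t) • T t (lam • y + A y)) = y)

/-- The open sector of half-angle `ω` around the positive real axis. -/
def Sector (ω : ℝ) : Set ℂ := {z : ℂ | z ≠ 0 ∧ |Complex.arg z| < ω}

/-- `T` extends to a (not necessarily bounded) holomorphic semigroup on a sector
`S_ω = {z ≠ 0 : |arg z| < ω}` for some `ω ∈ (0, π/2]`. -/
structure IsAnalyticSemigroup (T : ℝ → X →L[ℂ] X) : Prop where
  isSemigroup : IsSemigroup T
  analytic : ∃ ω : ℝ, 0 < ω ∧ ω ≤ Real.pi / 2 ∧ ∃ S : ℂ → X →L[ℂ] X,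
    (∀ t : ℝ, 0 < t → S t = T t) ∧
    (∀ x : X, DifferentiableOn ℂ (fun z => S z x) (Sector ω)) ∧
    (∀ z ∈ Sector ω, ∀ w ∈ Sector ω, S (z + w) = (S z).comp (S w))

/-- `T` extends to a bounded holomorphic semigroup on a sector
`S_ω = {z ≠ 0 : |arg z| < ω}` for some `ω ∈ (0, π/2]`. -/
structure IsBoundedAnalyticSemigroup (T : ℝ → X →L[ℂ] X) : Prop where
  isSemigroup : IsSemigroup T
  analytic : ∃ ω : ℝ, 0 < ω ∧ ω ≤ Real.pi / 2 ∧ ∃ S : ℂ → X →L[ℂ] X,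
    (∀ t : ℝ, 0 < t → S t = T t) ∧
    (∀ x : X, DifferentiableOn ℂ (fun z => S z x) (Sector ω)) ∧
    (∃ M : ℝ, ∀ z ∈ Sector ω, ‖S z‖ ≤ M) ∧
    (∀ z ∈ Sector ω, ∀ w ∈ Sector ω, S (z + w) = (S z).comp (S w))

/-- `-A` generates the analytic semigroup `T`.  (For analytic semigroups one always has
`T(t)X ⊆ D(A)` for `t > 0`; this is included so that `A T(t) x` is meaningful.) -/
structure IsGenAnalytic (T : ℝ → X →L[ℂ] X) (D : Set X) (A : X → X) : Prop where
  isGenerator : IsGenerator T D A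
  isAnalytic : IsAnalyticSemigroup T
  mapsTo_domain : ∀ t : ℝ, 0 < t → ∀ x : X, T t x ∈ D

/-- `-A` generates the bounded analytic semigroup `T`.  (For analytic semigroups one
always has `T(t)X ⊆ D(A)` for `t > 0`; this is included so that `A T(t) x` is
meaningful.) -/
structure IsGenBoundedAnalytic (T : ℝ → X →L[ℂ] X) (D : Set X) (A : X → X) : Prop where
  isGenerator : IsGenerator T D A
  isBoundedAnalytic : IsBoundedAnalyticSemigroup T
  mapsTo_domain : ∀ t : ℝ, 0 < t → ∀ x : X, T t x ∈ D

/-- `u` is a strong solution on the time interval `I` (`I = (0,τ)` or `I = (0,∞)`) of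
`u' + A u = f`, `u(0) = x₀`, with a.e. derivative `g`: `u ∈ W^{1,1}_loc` (it is the
indefinite integral of the locally integrable function `g`), `u(t) ∈ D(A)` and
`u'(t) + A u(t) = f(t)` for a.e. `t ∈ I`. -/
structure IsStrongSolutionOn (D : Set X) (A : X → X) (f : ℝ → X) (x₀ : X)
    (I : Set ℝ) (u g : ℝ → X) : Prop where
  init : u 0 = x₀
  locInt : ∀ b ∈ I, IntegrableOn g (Ioc 0 b)
  repr : ∀ t ∈ I, u t = x₀ + ∫ s in Ioc (0:ℝ) t, g s
  mem_domain : ∀ᵐ t ∂(volume.restrict I), u t ∈ D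
  eqn : ∀ᵐ t ∂(volume.restrict I), g t + A (u t) = f t

/-- `A` has (weighted) `L^1_v`-maximal regularity on `ℝ₊`: for every
`f ∈ L^1_v(ℝ₊; X)` there is a unique strong solution `u` of `u' + Au = f`, `u(0) = 0`,
and `‖u'‖_{L^1_v} + ‖Au‖_{L^1_v} ≤ C ‖f‖_{L^1_v}` with `C` independent of `f`. -/
def HasL1MaxRegWeighted (D : Set X) (A : X → X) (v : ℝ → ℝ) : Prop :=
  ∃ C : ℝ, ∀ f : ℝ → X,
    AEStronglyMeasurable f (volume.restrict (Ioi 0)) →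
    IntegrableOn (fun t => ‖f t‖ * v t) (Ioi 0) →
    ∃ u g : ℝ → X, IsStrongSolutionOn D A f 0 (Ioi 0) u g ∧
      (∀ u' g' : ℝ → X, IsStrongSolutionOn D A f 0 (Ioi 0) u' g' →
        ∀ t ∈ Ioi (0:ℝ), u' t = u t) ∧
      IntegrableOn (fun t => ‖g t‖ * v t) (Ioi 0) ∧
      IntegrableOn (fun t => ‖A (u t)‖ * v t) (Ioi 0) ∧
      (∫ t in Ioi (0:ℝ), ‖g t‖ * v t) + (∫ t in Ioi (0:ℝ), ‖A (u t)‖ * v t)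
        ≤ C * ∫ t in Ioi (0:ℝ), ‖f t‖ * v t

/-- `s` is a Lebesgue point of the locally integrable function `v`. -/
def IsLebesguePoint (v : ℝ → ℝ) (s : ℝ) : Prop :=
  Tendsto (fun ε : ℝ => (∫ t in Ioo (s - ε) (s + ε), |v t - v s|) / (2 * ε))
    (nhdsWithin 0 (Ioi 0)) (nhds 0)

/-!
(i) Uniqueness of solutions with zero data, together with the semigroup (which restarts a solution
from any time at which it lies in `D(A)`), makes the solution operator causal: for locally
integrable data `f` the solution on `(0, s)` depends only on `f` on `(0, s)`, so `L¹`-maximal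
regularity applied to the truncations of `f` gives `∫₀ˢ ‖u'‖ + ‖Au‖ ≤ C ∫₀ˢ ‖f‖` for every `s`.
A non-increasing weight is the superposition `v = ∫₀^∞ 1_{v > λ} dλ` of indicators of initial
intervals of `(0, ∞)`, and integrating these estimates in `λ` gives the weighted one.

(ii) For `x ∈ D(A)`, `A T(t) x = T(t) A x` and `v(t) ≤ v(t + s)`, so
`∫₀^∞ ‖T(t) A x‖ v(t) dt ≤ C ‖x‖ v(s)`. Letting `s → 0` along Lebesgue points of `v` gives
`T(t) A x = 0` for almost every `t > 0`, hence `A x = 0` by continuity and nondegeneracy of `T`.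
-/

open Topology

theorem exists_mem_Ioo_of_ae_restrict {P : ℝ → Prop} {S : Set ℝ} {a b : ℝ}
    (h : ∀ᵐ t ∂(volume.restrict S), P t) (hab : a < b) (hsub : Ioo a b ⊆ S) :
    ∃ t ∈ Ioo a b, P t := by
  have : (ae (volume.restrict (Ioo a b))).NeBot := ae_restrict_neBot.2 (by simp [hab])
  exact ((ae_restrict_mem measurableSet_Ioo).and
    (ae_restrict_of_ae_restrict_of_subset hsub h)).exists

theorem exists_isLebesguePoint_mem_Ioo {v : ℝ → ℝ} {a b : ℝ} (hv : IntegrableOn v (Ioo a b))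
    (hab : a < b) : ∃ s ∈ Ioo a b, IsLebesguePoint v s := by
  set w := (Ioo a b).indicator v
  have hae := IsUnifLocDoublingMeasure.ae_tendsto_average_norm_sub volume
    ((integrable_indicator_iff measurableSet_Ioo).2 hv).locallyIntegrable 1
  obtain ⟨s, hs, hsw⟩ := exists_mem_Ioo_of_ae_restrict (S := univ)
    (by rwa [Measure.restrict_univ]) hab (subset_univ _)
  refine ⟨s, hs, ?_⟩
  have hw : Tendsto (fun ε => ⨍ t in Metric.closedBall s ε, ‖w t - w s‖) (𝓝[>] 0) (𝓝 0) := by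
    refine hsw (fun _ => s) id tendsto_id ?_
    filter_upwards [self_mem_nhdsWithin] with ε (hε : 0 < ε)
    exact Metric.mem_closedBall_self (by simpa using hε.le)
  refine hw.congr' ?_
  filter_upwards [Ioo_mem_nhdsGT (lt_min (sub_pos.2 hs.1) (sub_pos.2 hs.2))] with ε hε
  have hsub : Ioo (s - ε) (s + ε) ⊆ Ioo a b :=
    Ioo_subset_Ioo (by linarith [min_le_left (s - a) (b - s), hε.2])
      (by linarith [min_le_right (s - a) (b - s), hε.2])
  rw [setAverage_eq, measureReal_def, Real.volume_closedBall,
    ENNReal.toReal_ofReal (by linarith [hε.1]), Real.closedBall_eq_Icc,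
    integral_Icc_eq_integral_Ioo, smul_eq_mul, div_eq_inv_mul]
  congr 1
  refine setIntegral_congr_fun measurableSet_Ioo fun t ht => ?_
  simp [w, indicator_of_mem (hsub ht), indicator_of_mem hs, Real.norm_eq_abs]

theorem frequently_isLebesguePoint_nhdsGT_zero {v : ℝ → ℝ} (hv : Measurable v)
    (hvpos : ∀ t ∈ Ioi (0:ℝ), 0 < v t) (hmono : MonotoneOn v (Ioi 0)) :
    ∃ᶠ s in 𝓝[>] 0, IsLebesguePoint v s := by
  refine frequently_iff.2 fun hU => ?_
  obtain ⟨δ, hδ, hδU⟩ := mem_nhdsGT_iff_exists_Ioo_subset.1 hU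
  have hvint : IntegrableOn v (Ioo 0 δ) :=
    Measure.integrableOn_of_bounded measure_Ioo_lt_top.ne hv.aestronglyMeasurable (M := v δ)
      ((ae_restrict_iff' measurableSet_Ioo).2 (Eventually.of_forall fun t ht => by
        rw [Real.norm_eq_abs, abs_of_pos (hvpos t ht.1)]
        exact hmono ht.1 hδ ht.2.le))
  obtain ⟨s, hs, hsL⟩ := exists_isLebesguePoint_mem_Ioo hvint hδ
  exact ⟨s, hδU hs, hsL⟩

section WeightedIntegrals

theorem eq_Ioi_or_exists_Ioo_subset_subset_Ioc {S : Set ℝ} (hS : S ⊆ Ioi 0)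
    (hdown : ∀ t ∈ S, Ioc 0 t ⊆ S) : S = Ioi 0 ∨ ∃ b, Ioo 0 b ⊆ S ∧ S ⊆ Ioc 0 b := by
  by_cases hbdd : BddAbove S
  · refine Or.inr ⟨sSup S, fun r hr => ?_, fun r hr => ⟨hS hr, le_csSup hbdd hr⟩⟩
    rcases S.eq_empty_or_nonempty with rfl | hne
    · simp at hr
    obtain ⟨e, he, hre⟩ := exists_lt_of_lt_csSup hne hr.2
    exact hdown e he ⟨hr.1, hre.le⟩
  · refine Or.inl (subset_antisymm hS fun r hr => ?_)
    obtain ⟨e, he, hre⟩ := not_bddAbove_iff.1 hbdd r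
    exact hdown e he ⟨hr, hre.le⟩

theorem setLIntegral_Ioi_le_of_forall_Ioo {F Φ : ℝ → ℝ≥0∞} {c : ℝ≥0∞}
    (h : ∀ b, ∫⁻ t in Ioo 0 b, F t ≤ c * ∫⁻ t in Ioo 0 b, Φ t) :
    ∫⁻ t in Ioi 0, F t ≤ c * ∫⁻ t in Ioi 0, Φ t := by
  have hIoi : Ioi (0:ℝ) = ⋃ n : ℕ, Ioo 0 (n : ℝ) := by
    ext t
    simpa using fun _ => exists_nat_gt t
  rw [hIoi, setLIntegral_iUnion_of_directed _
    (Monotone.directed_le fun m n hmn => Ioo_subset_Ioo_right (Nat.cast_le.2 hmn))]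
  exact iSup_le fun n => (h n).trans (by gcongr; exact subset_iUnion (fun n : ℕ => Ioo 0 (n : ℝ)) n)

theorem setLIntegral_le_of_forall_Ioo {F Φ : ℝ → ℝ≥0∞} {c : ℝ≥0∞} {S : Set ℝ}
    (hS : S ⊆ Ioi 0) (hdown : ∀ t ∈ S, Ioc 0 t ⊆ S)
    (h : ∀ b, ∫⁻ t in Ioo 0 b, F t ≤ c * ∫⁻ t in Ioo 0 b, Φ t) :
    ∫⁻ t in S, F t ≤ c * ∫⁻ t in S, Φ t := by
  rcases eq_Ioi_or_exists_Ioo_subset_subset_Ioc hS hdown with rfl | ⟨b, hbS, hSb⟩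
  · exact setLIntegral_Ioi_le_of_forall_Ioo h
  calc ∫⁻ t in S, F t ≤ ∫⁻ t in Ioc 0 b, F t := lintegral_mono_set hSb
    _ = ∫⁻ t in Ioo 0 b, F t := setLIntegral_congr Ioo_ae_eq_Ioc.symm
    _ ≤ c * ∫⁻ t in Ioo 0 b, Φ t := h b
    _ ≤ c * ∫⁻ t in S, Φ t := by gcongr

theorem setLIntegral_mul_ofReal_eq_lintegral_superlevel {H : ℝ → ℝ≥0∞} {v : ℝ → ℝ}
    (hH : AEMeasurable H (volume.restrict (Ioi 0))) (hv : Measurable v)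
    (hv0 : ∀ t ∈ Ioi (0:ℝ), 0 ≤ v t) :
    ∫⁻ t in Ioi 0, H t * ENNReal.ofReal (v t) =
      ∫⁻ lam in Ioi 0, ∫⁻ t in {t | lam < v t} ∩ Ioi 0, H t := by
  set μ := (volume.restrict (Ioi (0:ℝ))).withDensity H
  have hv0μ : 0 ≤ᵐ[μ] v := (withDensity_absolutelyContinuous _ H).ae_le
    ((ae_restrict_iff' measurableSet_Ioi).2 (Eventually.of_forall hv0))
  have h := lintegral_eq_lintegral_meas_lt μ hv0μ hv.aemeasurable
  rw [lintegral_withDensity_eq_lintegral_mul₀ hH hv.ennreal_ofReal.aemeasurable] at h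
  refine h.trans (lintegral_congr fun lam => ?_)
  have hm : MeasurableSet {t | lam < v t} := measurableSet_lt measurable_const hv
  rw [withDensity_apply _ hm, Measure.restrict_restrict hm]

theorem setLIntegral_mul_ofReal_le_of_antitoneOn {F Φ : ℝ → ℝ≥0∞} {v : ℝ → ℝ} {c : ℝ≥0∞}
    (hF : AEMeasurable F (volume.restrict (Ioi 0))) (hΦ : AEMeasurable Φ (volume.restrict (Ioi 0)))
    (hv : Measurable v) (hv0 : ∀ t ∈ Ioi (0:ℝ), 0 ≤ v t) (hanti : AntitoneOn v (Ioi 0))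
    (h : ∀ b, ∫⁻ t in Ioo 0 b, F t ≤ c * ∫⁻ t in Ioo 0 b, Φ t) :
    ∫⁻ t in Ioi 0, F t * ENNReal.ofReal (v t) ≤ c * ∫⁻ t in Ioi 0, Φ t * ENNReal.ofReal (v t) := by
  have hsuper : ∀ lam, ∀ t ∈ {t | lam < v t} ∩ Ioi 0, Ioc 0 t ⊆ {t | lam < v t} ∩ Ioi 0 :=
    fun lam t ht r hr => ⟨ht.1.trans_le (hanti hr.1 ht.2 hr.2), hr.1⟩
  have hmeas : Measurable fun lam => ∫⁻ t in {t | lam < v t} ∩ Ioi 0, Φ t :=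
    Antitone.measurable fun lam lam' hlam => lintegral_mono_set
      fun t ht => ⟨hlam.trans_lt ht.1, ht.2⟩
  rw [setLIntegral_mul_ofReal_eq_lintegral_superlevel hF hv hv0,
    setLIntegral_mul_ofReal_eq_lintegral_superlevel hΦ hv hv0, ← lintegral_const_mul c hmeas]
  exact lintegral_mono fun lam =>
    setLIntegral_le_of_forall_Ioo inter_subset_right (hsuper lam) h

theorem integrableOn_Ioo_of_integrableOn_norm_mul {E : Type*} [NormedAddCommGroup E] {f : ℝ → E}
    {v : ℝ → ℝ}
    (hfm : AEStronglyMeasurable f (volume.restrict (Ioi 0)))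
    (hfv : IntegrableOn (fun t => ‖f t‖ * v t) (Ioi 0)) (hvpos : ∀ t ∈ Ioi (0:ℝ), 0 < v t)
    (hanti : AntitoneOn v (Ioi 0)) (s : ℝ) : IntegrableOn f (Ioo 0 s) := by
  rcases le_or_gt s 0 with hs | hs
  · simp [Ioo_eq_empty (not_lt.2 hs)]
  refine Integrable.mono' ((hfv.mono_set Ioo_subset_Ioi_self).const_mul (v s)⁻¹)
    (hfm.mono_measure (Measure.restrict_mono Ioo_subset_Ioi_self le_rfl))
    ((ae_restrict_iff' measurableSet_Ioo).2 (Eventually.of_forall fun t ht => ?_))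
  rw [inv_mul_eq_div, le_div_iff₀ (hvpos s hs)]
  exact mul_le_mul_of_nonneg_left (hanti ht.1 hs ht.2.le) (norm_nonneg _)

variable {α : Type*} [MeasurableSpace α] {μ : Measure α} {a b c : α → ℝ}

theorem lintegral_ofReal_add_le_of_integral_add_le {K : ℝ} (ha : Integrable a μ)
    (hb : Integrable b μ) (hc : Integrable c μ) (ha0 : 0 ≤ᵐ[μ] a) (hb0 : 0 ≤ᵐ[μ] b)
    (hc0 : 0 ≤ᵐ[μ] c) (h : ∫ x, a x ∂μ + ∫ x, b x ∂μ ≤ K * ∫ x, c x ∂μ) :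
    ∫⁻ x, ENNReal.ofReal (a x) + ENNReal.ofReal (b x) ∂μ ≤
      ENNReal.ofReal K * ∫⁻ x, ENNReal.ofReal (c x) ∂μ := by
  rw [lintegral_add_left' ha.aemeasurable.ennreal_ofReal,
    ← ofReal_integral_eq_lintegral_ofReal ha ha0,
    ← ofReal_integral_eq_lintegral_ofReal hb hb0, ← ofReal_integral_eq_lintegral_ofReal hc hc0,
    ← ENNReal.ofReal_add (integral_nonneg_of_ae ha0) (integral_nonneg_of_ae hb0),
    ← ENNReal.ofReal_mul' (integral_nonneg_of_ae hc0)]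
  exact ENNReal.ofReal_le_ofReal h

theorem integrable_and_integral_add_le_of_lintegral_le {K : ℝ≥0}
    (ha : AEStronglyMeasurable a μ) (hb : AEStronglyMeasurable b μ) (hc : Integrable c μ)
    (ha0 : 0 ≤ᵐ[μ] a) (hb0 : 0 ≤ᵐ[μ] b) (hc0 : 0 ≤ᵐ[μ] c)
    (h : ∫⁻ x, ENNReal.ofReal (a x) + ENNReal.ofReal (b x) ∂μ ≤
      K * ∫⁻ x, ENNReal.ofReal (c x) ∂μ) :
    Integrable a μ ∧ Integrable b μ ∧ ∫ x, a x ∂μ + ∫ x, b x ∂μ ≤ K * ∫ x, c x ∂μ := by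
  have hfin : ∫⁻ x, ENNReal.ofReal (a x) + ENNReal.ofReal (b x) ∂μ < ⊤ :=
    h.trans_lt (ENNReal.mul_lt_top ENNReal.coe_lt_top hc.lintegral_lt_top)
  have hai : Integrable a μ := ⟨ha, (hasFiniteIntegral_iff_ofReal ha0).2
    ((lintegral_mono fun x => le_self_add).trans_lt hfin)⟩
  have hbi : Integrable b μ := ⟨hb, (hasFiniteIntegral_iff_ofReal hb0).2
    ((lintegral_mono fun x => le_add_self).trans_lt hfin)⟩
  refine ⟨hai, hbi, (ENNReal.ofReal_le_ofReal_iff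
    (mul_nonneg K.coe_nonneg (integral_nonneg_of_ae hc0))).1 ?_⟩
  rw [ENNReal.ofReal_add (integral_nonneg_of_ae ha0) (integral_nonneg_of_ae hb0),
    ofReal_integral_eq_lintegral_ofReal hai ha0, ofReal_integral_eq_lintegral_ofReal hbi hb0,
    ← lintegral_add_left' hai.aemeasurable.ennreal_ofReal, ENNReal.ofReal_mul K.coe_nonneg,
    ofReal_integral_eq_lintegral_ofReal hc hc0, ENNReal.ofReal_coe_nnreal]
  exact h

end WeightedIntegrals

/-- For the generator `-A` of `T` and large `λ`, this is the resolvent `(λ + A)⁻¹ x`. -/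
def orbitLaplace {E : Type*} [NormedAddCommGroup E] [NormedSpace ℂ E] (T : ℝ → E →L[ℂ] E)
    (lam : ℝ) (x : E) : E :=
  ∫ t in Ioi (0:ℝ), Real.exp (-lam * t) • T t x

namespace IsSemigroup

variable {E : Type*} [NormedAddCommGroup E] [NormedSpace ℂ E] {T : ℝ → E →L[ℂ] E}

theorem exists_norm_apply_le (hT : IsSemigroup T) (x : E) (b : ℝ) :
    ∃ M, ∀ t ∈ Ioc (0:ℝ) b, ‖T t x‖ ≤ M := by
  obtain ⟨M₀, hM₀⟩ := hT.boundedNearZero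
  obtain ⟨M₁, hM₁⟩ := (isCompact_Icc (a := (1:ℝ) / 2) (b := b)).exists_bound_of_continuousOn
    ((hT.strongCont x).mono fun t ht => lt_of_lt_of_le (by norm_num) ht.1)
  refine ⟨max (M₀ * ‖x‖) M₁, fun t ht => ?_⟩
  rcases lt_or_ge t (1 / 2) with h | h
  · calc ‖T t x‖ ≤ ‖T t‖ * ‖x‖ := (T t).le_opNorm x
      _ ≤ M₀ * ‖x‖ := by gcongr; exact hM₀ t ⟨ht.1, by linarith⟩
      _ ≤ _ := le_max_left _ _
  · exact (hM₁ t ⟨h, ht.2⟩).trans (le_max_right _ _)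

theorem integrableOn_Ioc (hT : IsSemigroup T) (x : E) (b : ℝ) :
    IntegrableOn (fun t => T t x) (Ioc 0 b) := by
  obtain ⟨M, hM⟩ := hT.exists_norm_apply_le x b
  refine ⟨((hT.strongCont x).mono Ioc_subset_Ioi_self).aestronglyMeasurable measurableSet_Ioc, ?_⟩
  exact HasFiniteIntegral.restrict_of_bounded (C := M) (by simp)
    ((ae_restrict_iff' measurableSet_Ioc).2 (Eventually.of_forall hM))

theorem intervalIntegrable (hT : IsSemigroup T) (x : E) {b : ℝ} (hb : 0 ≤ b) :
    IntervalIntegrable (fun t => T t x) volume 0 b :=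
  (intervalIntegrable_iff_integrableOn_Ioc_of_le hb).2 (hT.integrableOn_Ioc x b)

theorem integrableOn_Ioc_comp_sub (hT : IsSemigroup T) (x : E) (s b : ℝ) :
    IntegrableOn (fun r => T (r - s) x) (Ioc s b) := by
  have h := (measurePreserving_sub_right volume s).integrableOn_comp_preimage
    (measurableEmbedding_subRight s) (f := fun r => T r x) (s := Ioc 0 (b - s))
  simpa [Function.comp_def] using h.2 (hT.integrableOn_Ioc x (b - s))

theorem eq_zero_of_ae_apply_eq_zero (hT : IsSemigroup T) {x : E}
    (h : ∀ᵐ t ∂(volume.restrict (Ioi (0:ℝ))), T t x = 0) : x = 0 :=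
  hT.nondegenerate x fun _ ht =>
    Measure.eqOn_open_of_ae_eq h isOpen_Ioi (hT.strongCont x) continuousOn_const ht

variable [CompleteSpace E]

theorem apply_orbitLaplace {lam : ℝ} {z : E} (hT : IsSemigroup T)
    (hint : IntegrableOn (fun t => Real.exp (-lam * t) • T t z) (Ioi 0)) {r : ℝ} (hr : 0 < r) :
    T r (orbitLaplace T lam z) = Real.exp (lam * r) •
      (orbitLaplace T lam z - ∫ t in (0:ℝ)..r, Real.exp (-lam * t) • T t z) := by
  set h : ℝ → E := fun t => Real.exp (-lam * t) • T t z
  calc T r (orbitLaplace T lam z) = ∫ t in Ioi (0:ℝ), Real.exp (lam * r) • h (t + r) := by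
        rw [orbitLaplace, ← (T r).integral_comp_comm hint]
        refine setIntegral_congr_fun measurableSet_Ioi fun t ht => ?_
        have hsg : T r (T t z) = T (t + r) z := by rw [add_comm, hT.comp r t hr ht]; rfl
        simp only [h, ContinuousLinearMap.map_smul_of_tower, hsg, smul_smul, ← Real.exp_add]
        ring_nf
    _ = Real.exp (lam * r) • ∫ t in Ioi r, h t := by
        rw [integral_smul]
        congr 1
        simpa using (measurePreserving_add_right volume r).setIntegral_preimage_emb
          (measurableEmbedding_addRight r) h (Ioi r)
    _ = _ := by
        rw [← intervalIntegral.integral_Ioi_sub_Ioi hint hr.le]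
        simp [orbitLaplace, h]

theorem integral_sub_smul_apply_orbitLaplace {lam : ℝ} {z : E} (hT : IsSemigroup T)
    (hint : IntegrableOn (fun t => Real.exp (-lam * t) • T t z) (Ioi 0)) {s : ℝ} (hs : 0 < s) :
    ∫ r in Ioc 0 s, (T r z - lam • T r (orbitLaplace T lam z)) =
      orbitLaplace T lam z - T s (orbitLaplace T lam z) := by
  set x := orbitLaplace T lam z
  set h : ℝ → E := fun t => Real.exp (-lam * t) • T t z
  -- `G` agrees with `r ↦ T r x` on `(0, ∞)` and is continuous up to `G 0 = x`, whereas `T 0` is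
  -- not constrained at all.
  set G : ℝ → E := fun r => Real.exp (lam * r) • (x - ∫ t in (0:ℝ)..r, h t)
  have hGT : ∀ r, 0 < r → G r = T r x := fun r hr => (hT.apply_orbitLaplace hint hr).symm
  have hGcont : ContinuousOn G (Icc 0 s) := by
    have hJ := intervalIntegral.continuousOn_primitive_interval (a := 0) (b := s) (f := h)
      (μ := volume) (by
        rw [uIcc_of_le hs.le, integrableOn_Icc_iff_integrableOn_Ioc]
        exact hint.mono_set Ioc_subset_Ioi_self)
    rw [uIcc_of_le hs.le] at hJ
    exact (Real.continuous_exp.comp (continuous_const.mul continuous_id)).continuousOn.smul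
      (continuousOn_const.sub hJ)
  have hGderiv : ∀ r ∈ Ioo 0 s, HasDerivWithinAt G (lam • T r x - T r z) (Ioi r) r := by
    intro r hr
    have hcont : ContinuousOn h (Ioi 0) :=
      (Real.continuous_exp.comp (continuous_const.mul continuous_id)).continuousOn.smul
        (hT.strongCont z)
    have hJ : HasDerivAt (fun r => ∫ t in (0:ℝ)..r, h t) (h r) r :=
      intervalIntegral.integral_hasDerivAt_right
        ((intervalIntegrable_iff_integrableOn_Ioc_of_le hr.1.le).2
          (hint.mono_set Ioc_subset_Ioi_self))
        (hcont.stronglyMeasurableAtFilter isOpen_Ioi r hr.1)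
        (hcont.continuousAt (Ioi_mem_nhds hr.1))
    have hexp : HasDerivAt (fun r : ℝ => Real.exp (lam * r)) (Real.exp (lam * r) * lam) r := by
      simpa using ((hasDerivAt_id r).const_mul lam).exp
    convert (hexp.smul ((hasDerivAt_const r x).sub hJ)).hasDerivWithinAt using 1
    · rfl
    have hexph : Real.exp (lam * r) • h r = T r z := by simp [h, smul_smul, ← Real.exp_add]
    rw [← hGT r hr.1, zero_sub, smul_neg, hexph, mul_comm, ← smul_smul]
    simp only [G, Pi.sub_apply]
    abel
  have hFTC := intervalIntegral.integral_eq_sub_of_hasDeriv_right_of_le hs.le hGcont hGderiv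
    (((hT.intervalIntegrable x hs.le).smul lam).sub (hT.intervalIntegrable z hs.le))
  have hG0 : G 0 = x := by simp [G]
  rw [intervalIntegral.integral_of_le hs.le, hGT s hs, hG0] at hFTC
  rw [← neg_sub (T s x), ← hFTC, ← integral_neg]
  simp_rw [neg_sub]

theorem apply_orbitLaplace_comm {lam : ℝ} {z : E} (hT : IsSemigroup T)
    (hint : IntegrableOn (fun t => Real.exp (-lam * t) • T t z) (Ioi 0)) {t : ℝ} (ht : 0 < t) :
    T t (orbitLaplace T lam z) = orbitLaplace T lam (T t z) := by
  rw [orbitLaplace, ← (T t).integral_comp_comm hint]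
  refine setIntegral_congr_fun measurableSet_Ioi fun s hs => ?_
  have hcomm : T t (T s z) = T s (T t z) := by
    rw [← ContinuousLinearMap.comp_apply, ← hT.comp t s ht hs, add_comm, hT.comp s t hs ht]; rfl
  simp only [ContinuousLinearMap.map_smul_of_tower, hcomm]

end IsSemigroup

namespace IsGenerator

variable {E : Type*} [NormedAddCommGroup E] [NormedSpace ℂ E] {T : ℝ → E →L[ℂ] E} {D : Set E}
  {A : E → E}

theorem exists_orbitLaplace (hG : IsGenerator T D A) : ∃ lam : ℝ,
    (∀ x, IntegrableOn (fun t => Real.exp (-lam * t) • T t x) (Ioi 0)) ∧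
    (∀ x, orbitLaplace T lam x ∈ D) ∧
    (∀ x, lam • orbitLaplace T lam x + A (orbitLaplace T lam x) = x) ∧
    (∀ y ∈ D, orbitLaplace T lam (lam • y + A y) = y) := by
  obtain ⟨ω, hω⟩ := hG.laplace
  exact ⟨ω + 1, hω _ (lt_add_one ω)⟩

theorem zero_mem (hG : IsGenerator T D A) : (0 : E) ∈ D := by
  obtain ⟨lam, -, hmem, -, -⟩ := hG.exists_orbitLaplace
  simpa [orbitLaplace] using hmem 0

theorem map_zero (hG : IsGenerator T D A) : A 0 = 0 := by
  obtain ⟨lam, -, -, hres, -⟩ := hG.exists_orbitLaplace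
  simpa [orbitLaplace] using hres 0

theorem sub_mem (hG : IsGenerator T D A) {x y : E} (hx : x ∈ D) (hy : y ∈ D) : x - y ∈ D := by
  simpa [sub_eq_add_neg] using hG.add_mem x hx _ (hG.smul_mem (-1) y hy)

theorem map_sub (hG : IsGenerator T D A) {x y : E} (hx : x ∈ D) (hy : y ∈ D) :
    A (x - y) = A x - A y := by
  have h := hG.map_add x hx _ (hG.smul_mem (-1) y hy)
  rw [hG.map_smul (-1) y hy] at h
  simpa [sub_eq_add_neg] using h

variable [CompleteSpace E]

theorem apply_mem (hG : IsGenerator T D A) {y : E} (hy : y ∈ D) {t : ℝ} (ht : 0 < t) :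
    T t y ∈ D := by
  obtain ⟨lam, hint, hmem, -, hinv⟩ := hG.exists_orbitLaplace
  rw [← hinv y hy, hG.isSemigroup.apply_orbitLaplace_comm (hint _) ht]
  exact hmem _

theorem map_apply (hG : IsGenerator T D A) {y : E} (hy : y ∈ D) {t : ℝ} (ht : 0 < t) :
    A (T t y) = T t (A y) := by
  obtain ⟨lam, hint, -, hres, hinv⟩ := hG.exists_orbitLaplace
  have hTy : T t y = orbitLaplace T lam (T t (lam • y + A y)) := by
    rw [← hG.isSemigroup.apply_orbitLaplace_comm (hint _) ht, hinv y hy]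
  have h := hres (T t (lam • y + A y))
  rw [← hTy, (T t).map_add, (T t).map_smul_of_tower] at h
  exact add_left_cancel h

theorem apply_eq_sub_integral (hG : IsGenerator T D A) {y : E} (hy : y ∈ D) {s : ℝ}
    (hs : 0 < s) : T s y = y - ∫ r in Ioc 0 s, T r (A y) := by
  obtain ⟨lam, hint, -, -, hinv⟩ := hG.exists_orbitLaplace
  have h := hG.isSemigroup.integral_sub_smul_apply_orbitLaplace (hint (lam • y + A y)) hs
  have hA : ∀ r, T r (lam • y + A y) - lam • T r y = T r (A y) := fun r => by
    rw [(T r).map_add, (T r).map_smul_of_tower, add_sub_cancel_left]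
  simp only [hinv y hy, hA] at h
  rw [h, sub_sub_self]

theorem integral_Ioc_apply_sub (hG : IsGenerator T D A) {y : E} (hy : y ∈ D) {s r : ℝ}
    (hsr : s < r) : ∫ ρ in Ioc s r, T (ρ - s) (A y) = y - T (r - s) y := by
  rw [hG.apply_eq_sub_integral hy (sub_pos.2 hsr), sub_sub_self,
    ← intervalIntegral.integral_of_le hsr.le,
    intervalIntegral.integral_comp_sub_right (fun ρ => T ρ (A y)), sub_self,
    intervalIntegral.integral_of_le (sub_pos.2 hsr).le]

end IsGenerator

section StrongSolution

variable {E : Type*} [NormedAddCommGroup E] [NormedSpace ℂ E] {T : ℝ → E →L[ℂ] E} {D : Set E}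
  {A : E → E}

theorem isStrongSolutionOn_zero (h0 : (0 : E) ∈ D) (hA0 : A 0 = 0) (I : Set ℝ) :
    IsStrongSolutionOn D A 0 0 I 0 0 where
  init := rfl
  locInt _ _ := integrableOn_zero
  repr _ _ := by simp
  mem_domain := Eventually.of_forall fun _ => h0
  eqn := Eventually.of_forall fun _ => by simp [hA0]

theorem IsStrongSolutionOn.sub (hG : IsGenerator T D A) {I : Set ℝ} {f₁ f₂ u₁ u₂ g₁ g₂ : ℝ → E}
    {x₁ x₂ : E} (h₁ : IsStrongSolutionOn D A f₁ x₁ I u₁ g₁)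
    (h₂ : IsStrongSolutionOn D A f₂ x₂ I u₂ g₂) :
    IsStrongSolutionOn D A (f₁ - f₂) (x₁ - x₂) I (u₁ - u₂) (g₁ - g₂) where
  init := by simp [h₁.init, h₂.init]
  locInt b hb := (h₁.locInt b hb).sub (h₂.locInt b hb)
  repr t ht := by
    simp only [Pi.sub_apply, h₁.repr t ht, h₂.repr t ht,
      integral_sub (h₁.locInt t ht) (h₂.locInt t ht)]
    abel
  mem_domain := by
    filter_upwards [h₁.mem_domain, h₂.mem_domain] with t ht₁ ht₂
    exact hG.sub_mem ht₁ ht₂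
  eqn := by
    filter_upwards [h₁.mem_domain, h₂.mem_domain, h₁.eqn, h₂.eqn] with t ht₁ ht₂ he₁ he₂
    simp only [Pi.sub_apply, hG.map_sub ht₁ ht₂, ← he₁, ← he₂]
    abel

variable [CompleteSpace E]

theorem IsGenerator.isStrongSolutionOn_extend (hG : IsGenerator T D A) {f w g : ℝ → E}
    (hw : IsStrongSolutionOn D A f 0 (Ioi 0) w g) {s : ℝ} (hs : 0 < s) (hws : w s ∈ D)
    (hf : ∀ t ∈ Ioc 0 s, f t = 0) :
    IsStrongSolutionOn D A 0 0 (Ioi 0) (fun r => if r ≤ s then w r else T (r - s) (w s))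
      (fun r => if r ≤ s then g r else -T (r - s) (A (w s))) := by
  set y := w s
  have hleft : ∀ r, r ≤ s → (if r ≤ s then g r else -T (r - s) (A y)) = g r := fun r hr => if_pos hr
  have hright : ∀ r, s < r → (if r ≤ s then g r else -T (r - s) (A y)) = -T (r - s) (A y) :=
    fun r hr => if_neg (not_le.2 hr)
  have hint : ∀ b, IntegrableOn (fun r => if r ≤ s then g r else -T (r - s) (A y)) (Ioc 0 b) := by
    intro b
    refine IntegrableOn.mono_set (IntegrableOn.union ?_ ?_) (Ioc_subset_Ioc_union_Ioc (b := s))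
    · exact (hw.locInt s hs).congr_fun (fun r hr => (hleft r hr.2).symm) measurableSet_Ioc
    · exact (hG.isSemigroup.integrableOn_Ioc_comp_sub (A y) s b).neg.congr_fun
        (fun r hr => (hright r hr.1).symm) measurableSet_Ioc
  refine ⟨by simp [hs.le, hw.init], fun b _ => hint b, fun r hr => ?_, ?_, ?_⟩
  · rw [zero_add]
    by_cases hrs : r ≤ s
    · rw [if_pos hrs, hw.repr r hr, zero_add]
      exact setIntegral_congr_fun measurableSet_Ioc fun ρ hρ => (hleft ρ (hρ.2.trans hrs)).symm
    · push Not at hrs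
      rw [if_neg (not_le.2 hrs), ← Ioc_union_Ioc_eq_Ioc hs.le hrs.le,
        setIntegral_union (Ioc_disjoint_Ioc_of_le le_rfl) measurableSet_Ioc
          (hint s) ((hint r).mono_set (Ioc_subset_Ioc_left hs.le)),
        setIntegral_congr_fun measurableSet_Ioc fun ρ hρ => hleft ρ hρ.2,
        setIntegral_congr_fun measurableSet_Ioc fun ρ hρ => hright ρ hρ.1,
        integral_neg, hG.integral_Ioc_apply_sub hws hrs, ← zero_add (∫ x in Ioc 0 s, g x),
        ← hw.repr s hs]
      abel
  · filter_upwards [hw.mem_domain] with r hr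
    split_ifs with hrs
    · exact hr
    · exact hG.apply_mem hws (sub_pos.2 (not_le.1 hrs))
  · filter_upwards [hw.eqn, ae_restrict_mem measurableSet_Ioi] with r hr hr0
    split_ifs with hrs
    · rw [hr, hf r ⟨hr0, hrs⟩, Pi.zero_apply]
    · rw [hG.map_apply hws (sub_pos.2 (not_le.1 hrs)), neg_add_cancel, Pi.zero_apply]

end StrongSolution

section Uniqueness

variable {E : Type*} [NormedAddCommGroup E] [NormedSpace ℂ E] {T : ℝ → E →L[ℂ] E} {D : Set E}
  {A : E → E}

theorem HasL1MaxRegWeighted.eq_zero_of_isStrongSolutionOn {v : ℝ → ℝ}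
    (hMR : HasL1MaxRegWeighted D A v) (h0 : (0 : E) ∈ D) (hA0 : A 0 = 0) {u g : ℝ → E}
    (h : IsStrongSolutionOn D A 0 0 (Ioi 0) u g) : ∀ t ∈ Ioi (0:ℝ), u t = 0 := by
  obtain ⟨C, hC⟩ := hMR
  obtain ⟨_, _, -, huniq, -⟩ := hC 0 aestronglyMeasurable_const (by simp)
  intro t ht
  rw [huniq u g h t ht, ← huniq 0 0 (isStrongSolutionOn_zero h0 hA0 _) t ht, Pi.zero_apply]

variable [CompleteSpace E]

theorem IsGenerator.eqOn_Ioo_of_isStrongSolutionOn (hG : IsGenerator T D A)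
    (huniq : ∀ u g : ℝ → E, IsStrongSolutionOn D A 0 0 (Ioi 0) u g → ∀ t ∈ Ioi (0:ℝ), u t = 0)
    {f₁ f₂ u₁ u₂ g₁ g₂ : ℝ → E} {s : ℝ} (h₁ : IsStrongSolutionOn D A f₁ 0 (Ioi 0) u₁ g₁)
    (h₂ : IsStrongSolutionOn D A f₂ 0 (Ioi 0) u₂ g₂) (hf : EqOn f₁ f₂ (Ioo 0 s)) :
    EqOn u₁ u₂ (Ioo 0 s) := by
  intro t ht
  -- `u₁ - u₂` has data vanishing on `(0, s)`; continued by the semigroup from a time in `(t, s)`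
  -- at which it lies in `D`, it becomes a solution with zero data.
  have hw := h₁.sub hG h₂
  rw [sub_zero] at hw
  obtain ⟨s', hs', hD⟩ := exists_mem_Ioo_of_ae_restrict hw.mem_domain ht.2
    fun r hr => ht.1.trans hr.1
  have hzero := huniq _ _ (hG.isStrongSolutionOn_extend hw (ht.1.trans hs'.1) hD
    fun r hr => sub_eq_zero.2 (hf ⟨hr.1, hr.2.trans_lt hs'.2⟩)) t ht.1
  simpa [if_pos hs'.1.le, sub_eq_zero] using hzero

end Uniqueness

section Gluing

variable {E : Type*} [NormedAddCommGroup E] [NormedSpace ℂ E] {D : Set E} {A : E → E}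

theorem isStrongSolutionOn_glue {f : ℝ → E} {F U G : ℕ → ℝ → E}
    (hsol : ∀ n, IsStrongSolutionOn D A (F n) 0 (Ioi 0) (U n) (G n))
    (hF : ∀ n, EqOn (F n) f (Ioo 0 (n + 1)))
    (hU : ∀ m n, m ≤ n → EqOn (U m) (U n) (Ioo 0 (m + 1))) :
    IsStrongSolutionOn D A f 0 (Ioi 0) (fun t => U ⌊t⌋₊ t) (fun t => G ⌊t⌋₊ t) := by
  have hfloor : ∀ t : ℝ, 0 < t → t ∈ Ioo 0 (⌊t⌋₊ + 1 : ℝ) := fun t ht =>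
    ⟨ht, Nat.lt_floor_add_one t⟩
  have hUfloor : ∀ n : ℕ, EqOn (fun t => U ⌊t⌋₊ t) (U n) (Ioo 0 (n + 1)) := fun n t ht =>
    hU _ n (Nat.le_of_lt_succ ((Nat.floor_lt ht.1.le).2 (by exact_mod_cast ht.2))) (hfloor t ht.1)
  have hGfloor : ∀ n : ℕ, ∀ᵐ t : ℝ ∂(volume.restrict (Ioi 0)), t < n + 1 → G ⌊t⌋₊ t = G n t := by
    intro n
    filter_upwards [ae_all_iff.2 fun m => (hsol m).eqn, ae_restrict_mem measurableSet_Ioi]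
      with t he ht htn
    have h₁ := he ⌊t⌋₊
    have h₂ := he n
    rw [hF _ (hfloor t ht)] at h₁
    rw [hF n ⟨ht, htn⟩, ← hUfloor n ⟨ht, htn⟩] at h₂
    exact add_right_cancel (h₁.trans h₂.symm)
  have hGIoc : ∀ b : ℝ, (fun t => G ⌊t⌋₊ t) =ᵐ[volume.restrict (Ioc 0 b)] G ⌊b⌋₊ := by
    intro b
    filter_upwards [ae_restrict_of_ae_restrict_of_subset Ioc_subset_Ioi_self (hGfloor ⌊b⌋₊),
      ae_restrict_mem measurableSet_Ioc] with t h ht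
    exact h (ht.2.trans_lt (Nat.lt_floor_add_one b))
  refine ⟨by simp [(hsol 0).init], fun b hb => ((hsol ⌊b⌋₊).locInt b hb).congr (hGIoc b).symm,
    fun t ht => ?_, ?_, ?_⟩
  · rw [(hsol ⌊t⌋₊).repr t ht]
    exact congrArg _ (integral_congr_ae (hGIoc t).symm)
  · filter_upwards [ae_all_iff.2 fun m => (hsol m).mem_domain] with t h
    exact h _
  · filter_upwards [ae_all_iff.2 fun m => (hsol m).eqn, ae_restrict_mem measurableSet_Ioi]
      with t he ht
    rw [he, hF _ (hfloor t ht)]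

end Gluing

section NonincreasingWeights

variable {E : Type*} [NormedAddCommGroup E] [NormedSpace ℂ E] {T : ℝ → E →L[ℂ] E} {D : Set E}
  {A : E → E}

theorem IsStrongSolutionOn.aestronglyMeasurable_deriv {f u g : ℝ → E} {x₀ : E}
    (h : IsStrongSolutionOn D A f x₀ (Ioi 0) u g) :
    AEStronglyMeasurable g (volume.restrict (Ioi 0)) := by
  have hIoi : ⋃ n : ℕ, Ioc (0:ℝ) (n + 1) = Ioi 0 :=
    iUnion_Ioc_eq_Ioi_self_iff.2 fun t _ => (exists_nat_ge t).imp fun n hn => by linarith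
  rw [← hIoi, aestronglyMeasurable_iUnion_iff]
  exact fun n => (h.locInt _ (mem_Ioi.2 (by positivity))).aestronglyMeasurable

theorem IsStrongSolutionOn.setLIntegral_Ioo_eq {f₁ f₂ u₁ u₂ g₁ g₂ : ℝ → E} {x₁ x₂ : E} {s : ℝ}
    (h₁ : IsStrongSolutionOn D A f₁ x₁ (Ioi 0) u₁ g₁)
    (h₂ : IsStrongSolutionOn D A f₂ x₂ (Ioi 0) u₂ g₂) (hf : EqOn f₁ f₂ (Ioo 0 s)) (hu : EqOn u₁ u₂ (Ioo 0 s)) :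
    ∫⁻ t in Ioo 0 s, ‖g₁ t‖ₑ + ‖A (u₁ t)‖ₑ = ∫⁻ t in Ioo 0 s, ‖g₂ t‖ₑ + ‖A (u₂ t)‖ₑ := by
  refine lintegral_congr_ae ?_
  filter_upwards [ae_restrict_of_ae_restrict_of_subset Ioo_subset_Ioi_self h₁.eqn,
    ae_restrict_of_ae_restrict_of_subset Ioo_subset_Ioi_self h₂.eqn,
    ae_restrict_mem measurableSet_Ioo] with t he₁ he₂ ht
  rw [hf ht, ← he₂, hu ht] at he₁
  rw [add_right_cancel he₁, hu ht]

theorem HasL1MaxRegWeighted.exists_lintegral_le (hMR : HasL1MaxRegWeighted D A fun _ => (1:ℝ)) :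
    ∃ c : ℝ≥0, ∀ f : ℝ → E, AEStronglyMeasurable f (volume.restrict (Ioi 0)) →
      IntegrableOn f (Ioi 0) → ∃ u g : ℝ → E, IsStrongSolutionOn D A f 0 (Ioi 0) u g ∧
        ∫⁻ t in Ioi 0, ‖g t‖ₑ + ‖A (u t)‖ₑ ≤
          c * ∫⁻ t in Ioi 0, ‖f t‖ₑ := by
  obtain ⟨C, hC⟩ := hMR
  refine ⟨C.toNNReal, fun f hfm hf => ?_⟩
  have hf1 : IntegrableOn (fun t => ‖f t‖ * 1) (Ioi 0) := by simp only [mul_one]; exact hf.norm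
  obtain ⟨u, g, hsol, -, hg, hAu, hbound⟩ := hC f hfm hf1
  refine ⟨u, g, hsol, ?_⟩
  have hnonneg : ∀ h : ℝ → E, 0 ≤ᵐ[volume.restrict (Ioi 0)] fun t => ‖h t‖ * 1 :=
    fun h => Eventually.of_forall fun _ => by positivity
  have h := lintegral_ofReal_add_le_of_integral_add_le hg hAu hf1 (hnonneg g)
    (hnonneg fun t => A (u t)) (hnonneg f) hbound
  simp only [mul_one, ofReal_norm] at h
  exact h

variable [CompleteSpace E]

theorem HasL1MaxRegWeighted.exists_local_estimate (hG : IsGenerator T D A)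
    (hMR : HasL1MaxRegWeighted D A fun _ => (1:ℝ)) :
    ∃ c : ℝ≥0, ∀ f : ℝ → E, AEStronglyMeasurable f (volume.restrict (Ioi 0)) →
      (∀ s, IntegrableOn f (Ioo 0 s)) →
      ∃ u g : ℝ → E, IsStrongSolutionOn D A f 0 (Ioi 0) u g ∧
        (∀ u' g' : ℝ → E, IsStrongSolutionOn D A f 0 (Ioi 0) u' g' →
          ∀ t ∈ Ioi (0:ℝ), u' t = u t) ∧
        ∀ s, ∫⁻ t in Ioo 0 s, ‖g t‖ₑ + ‖A (u t)‖ₑ ≤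
          c * ∫⁻ t in Ioo 0 s, ‖f t‖ₑ := by
  have huniq : ∀ u g : ℝ → E, IsStrongSolutionOn D A 0 0 (Ioi 0) u g → ∀ t ∈ Ioi (0:ℝ), u t = 0 :=
    fun u g h => hMR.eq_zero_of_isStrongSolutionOn hG.zero_mem hG.map_zero h
  obtain ⟨c, hc⟩ := hMR.exists_lintegral_le
  refine ⟨c, fun f hfm hf => ?_⟩
  have htrunc : ∀ s, ∃ us gs : ℝ → E,
      IsStrongSolutionOn D A ((Ioo 0 s).indicator f) 0 (Ioi 0) us gs ∧
      ∫⁻ t in Ioi 0, ‖gs t‖ₑ + ‖A (us t)‖ₑ ≤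
        c * ∫⁻ t in Ioo 0 s, ‖f t‖ₑ := fun s => by
    obtain ⟨us, gs, hsol, hest⟩ := hc _ (hfm.indicator measurableSet_Ioo)
      ((integrable_indicator_iff measurableSet_Ioo).2 (hf s)).integrableOn
    refine ⟨us, gs, hsol, hest.trans_eq ?_⟩
    simp only [enorm_indicator_eq_indicator_enorm,
      lintegral_indicator measurableSet_Ioo, Measure.restrict_restrict measurableSet_Ioo,
      inter_eq_left.2 Ioo_subset_Ioi_self]
  choose U G hU hUest using fun n : ℕ => htrunc (n + 1)
  have hsol := isStrongSolutionOn_glue hU (fun n t ht => indicator_of_mem ht f)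
    fun m n hmn => hG.eqOn_Ioo_of_isStrongSolutionOn huniq (hU m) (hU n) fun t ht => by
      have ht' : t ∈ Ioo 0 ((n : ℝ) + 1) := ⟨ht.1, ht.2.trans_le (by gcongr)⟩
      rw [indicator_of_mem ht, indicator_of_mem ht']
  refine ⟨_, _, hsol, fun u' g' h' t ht => hG.eqOn_Ioo_of_isStrongSolutionOn huniq h'
    (hU ⌊t⌋₊) (fun r hr => (indicator_of_mem hr f).symm) ⟨ht, Nat.lt_floor_add_one t⟩,
    fun s => ?_⟩
  obtain ⟨us, gs, hsols, hest⟩ := htrunc s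
  have hf' : EqOn f ((Ioo 0 s).indicator f) (Ioo 0 s) := fun r hr => (indicator_of_mem hr f).symm
  rw [hsol.setLIntegral_Ioo_eq hsols hf' (hG.eqOn_Ioo_of_isStrongSolutionOn huniq hsol hsols hf')]
  exact (lintegral_mono_set Ioo_subset_Ioi_self).trans hest

theorem HasL1MaxRegWeighted.of_antitoneOn (hG : IsGenerator T D A)
    (hMR : HasL1MaxRegWeighted D A fun _ => (1:ℝ)) {v : ℝ → ℝ} (hv : Measurable v)
    (hvpos : ∀ t ∈ Ioi (0:ℝ), 0 < v t) (hanti : AntitoneOn v (Ioi 0)) :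
    HasL1MaxRegWeighted D A v := by
  obtain ⟨c, hc⟩ := hMR.exists_local_estimate hG
  refine ⟨c, fun f hfm hfv => ?_⟩
  obtain ⟨u, g, hsol, huniq, hest⟩ :=
    hc f hfm (integrableOn_Ioo_of_integrableOn_norm_mul hfm hfv hvpos hanti)
  have hgm := hsol.aestronglyMeasurable_deriv
  have hAum : AEStronglyMeasurable (fun t => A (u t)) (volume.restrict (Ioi 0)) := by
    refine (hfm.sub hgm).congr ?_
    filter_upwards [hsol.eqn] with t ht
    rw [Pi.sub_apply, ← ht, add_sub_cancel_left]
  have hweighted := setLIntegral_mul_ofReal_le_of_antitoneOn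
    (hgm.enorm.add hAum.enorm) hfm.enorm hv (fun t ht => (hvpos t ht).le) hanti hest
  simp only [Pi.add_apply, add_mul, ← ofReal_norm, ← ENNReal.ofReal_mul (norm_nonneg _)]
    at hweighted
  have hv0 : ∀ᵐ t ∂(volume.restrict (Ioi (0:ℝ))), 0 ≤ v t :=
    (ae_restrict_iff' measurableSet_Ioi).2 (Eventually.of_forall fun t ht => (hvpos t ht).le)
  obtain ⟨hgv, hAuv, hbound⟩ := integrable_and_integral_add_le_of_lintegral_le
    (a := fun t => ‖g t‖ * v t) (b := fun t => ‖A (u t)‖ * v t)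
    (hgm.norm.mul hv.aestronglyMeasurable) (hAum.norm.mul hv.aestronglyMeasurable) hfv
    (hv0.mono fun t ht => mul_nonneg (norm_nonneg _) ht)
    (hv0.mono fun t ht => mul_nonneg (norm_nonneg _) ht)
    (hv0.mono fun t ht => mul_nonneg (norm_nonneg _) ht) hweighted
  exact ⟨u, g, hsol, huniq, hgv, hAuv, hbound⟩

end NonincreasingWeights

theorem IsGenerator.map_eq_zero_of_lintegral_le {E : Type*} [NormedAddCommGroup E]
    [NormedSpace ℂ E] [CompleteSpace E] {T : ℝ → E →L[ℂ] E} {D : Set E} {A : E → E}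
    (hG : IsGenerator T D A) {v : ℝ → ℝ} (hv : Measurable v) (hvpos : ∀ t ∈ Ioi (0:ℝ), 0 < v t)
    (hmono : MonotoneOn v (Ioi 0)) (hv0 : Tendsto v (𝓝[>] 0) (𝓝 0)) {C : ℝ}
    (hC : ∀ s ∈ Ioi (0:ℝ), IsLebesguePoint v s → ∀ x : E,
      ∫⁻ t in Ioi (0:ℝ), ENNReal.ofReal (‖A (T t x)‖ * v (t + s)) ≤ ENNReal.ofReal (C * ‖x‖ * v s))
    {x : E} (hx : x ∈ D) : A x = 0 := by
  set L := ∫⁻ t in Ioi (0:ℝ), ENNReal.ofReal (‖T t (A x)‖ * v t)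
  have hLs : ∀ s ∈ Ioi (0:ℝ), IsLebesguePoint v s → L ≤ ENNReal.ofReal (C * ‖x‖ * v s) := by
    refine fun s hs hsL =>
      (setLIntegral_mono' measurableSet_Ioi fun t ht => ?_).trans (hC s hs hsL x)
    rw [hG.map_apply hx ht]
    gcongr
    exact hmono ht (mem_Ioi.2 (add_pos ht hs)) (le_add_of_nonneg_right hs.le)
  set l := 𝓝[>] (0:ℝ) ⊓ 𝓟 {s | IsLebesguePoint v s}
  have : l.NeBot := frequently_iff_neBot.1 (frequently_isLebesguePoint_nhdsGT_zero hv hvpos hmono)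
  have hlim : Tendsto (fun s => ENNReal.ofReal (C * ‖x‖ * v s)) l (𝓝 0) := by
    simpa using ENNReal.tendsto_ofReal ((hv0.const_mul (C * ‖x‖)).mono_left inf_le_left)
  have hL : L = 0 := le_antisymm (ge_of_tendsto hlim (by
    filter_upwards [mem_inf_of_left self_mem_nhdsWithin, mem_inf_of_right (mem_principal_self _)]
      with s hs hsL using hLs s hs hsL)) zero_le
  have hTAx := ((hG.isSemigroup.strongCont (A x)).aestronglyMeasurable (μ := volume)
    measurableSet_Ioi).norm
  have hmeas := (hTAx.aemeasurable.mul hv.aemeasurable).ennreal_ofReal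
  refine hG.isSemigroup.eq_zero_of_ae_apply_eq_zero ?_
  filter_upwards [(lintegral_eq_zero_iff' hmeas).1 hL, ae_restrict_mem measurableSet_Ioi]
    with t ht ht0
  rw [Pi.zero_apply, ENNReal.ofReal_eq_zero] at ht
  exact norm_le_zero_iff.1 (nonpos_of_mul_nonpos_left ht (hvpos t ht0))

/-- Corollary 2.8 of the paper.
(i) If `-A` generates a bounded analytic semigroup on a Banach space `X` and `A` has
`L^1`-maximal regularity on `ℝ₊`, then `A` has `L^1_v`-maximal regularity on `ℝ₊` for
every non-increasing weight `v` on `(0,∞)`.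
(ii) If `-A` generates an analytic semigroup `T` on `X`, `v` is a non-decreasing weight
on `(0,∞)` with `v(t) → 0` as `t → 0⁺`, and there is a constant `C` with
`∫_0^∞ ‖A T(t) x‖ v(t+s) dt ≤ C ‖x‖ v(s)` for every Lebesgue point `s` of `v` and every
`x ∈ X`, then `A x = 0` for all `x ∈ D(A)`. -/
theorem statement3 :
    (∀ (T : ℝ → X →L[ℂ] X) (D : Set X) (A : X → X),
      IsGenBoundedAnalytic T D A →
      HasL1MaxRegWeighted D A (fun _ => (1:ℝ)) →
      ∀ v : ℝ → ℝ, Measurable v → (∀ t ∈ Ioi (0:ℝ), 0 < v t) →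
        AntitoneOn v (Ioi 0) →
        HasL1MaxRegWeighted D A v) ∧
    (∀ (T : ℝ → X →L[ℂ] X) (D : Set X) (A : X → X),
      IsGenAnalytic T D A →
      ∀ v : ℝ → ℝ, Measurable v → (∀ t ∈ Ioi (0:ℝ), 0 < v t) →
        MonotoneOn v (Ioi 0) →
        Tendsto v (nhdsWithin 0 (Ioi 0)) (nhds 0) →
        (∃ C : ℝ, ∀ s ∈ Ioi (0:ℝ), IsLebesguePoint v s → ∀ x : X,
          (∫⁻ t in Ioi (0:ℝ), ENNReal.ofReal (‖A (T t x)‖ * v (t + s)))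
            ≤ ENNReal.ofReal (C * ‖x‖ * v s)) →
        ∀ x ∈ D, A x = 0) :=
  ⟨fun _ _ _ hG hMR _ hv hvpos hanti => hMR.of_antitoneOn hG.isGenerator hv hvpos hanti,
    fun _ _ _ hG _ hv hvpos hmono hv0 ⟨_, hC⟩ _ hx =>
      hG.isGenerator.map_eq_zero_of_lintegral_le hv hvpos hmono hv0 hC hx⟩
end
end

section
/- For any quasi-concave function φ : (0,∞) → (0,∞): (i) there exists a constant C with ∫_0^t (φ(s)/s) ds ≤ C φ(t) for all t > 0 if and only if the lower dilation index α_φ is strictly positive; (ii) there exists a constant C with ∫_t^∞ (φ(s)/s²) ds ≤ C φ(t)/t for all t > 0 if and only if the upper dilation index β_φ is strictly less than 1. -/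
/-!
The dilation function `s_φ` of a quasi-concave `φ` is submultiplicative with
`min 1 t ≤ s_φ t ≤ max 1 t`, so by Fekete's lemma `log s_φ(t) / log t` has limits at `0` and `∞`,
and `α_φ > 0` (resp. `β_φ < 1`) exactly when `s_φ a < 1` for some `a < 1`
(resp. `s_φ b < b` for some `b > 1`).
Such a contraction makes the integral of `φ(s)/s` (resp. `φ(s)/s²`) decay geometrically along the
pieces `(t a^(k+1), t a^k]` (resp. `[t b^k, t b^(k+1))`); summing gives the integral bounds.
Conversely, monotonicity of `φ` (resp. of `φ(s)/s`) bounds the integral over `[e^(-L) t, t]`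
(resp. `[t, e^L t]`) from below by `L φ(e^(-L) t)` (resp. `L φ(e^L t) / (e^L t)`), so an integral
bound with constant `C < L` forces `s_φ(e^(-L)) ≤ C / L < 1` (resp. `s_φ(e^L) ≤ (C / L) e^L < e^L`).
-/

open MeasureTheory Set Filter ENNReal NNReal

noncomputable section

/-- `φ : (0,∞) → (0,∞)` is quasi-concave: non-decreasing and
`φ(t) ≤ max(1, t/s) φ(s)` for all `s, t > 0`. -/
def QuasiConcaveOn (φ : ℝ → ℝ) : Prop :=
  MonotoneOn φ (Ioi 0) ∧
  ∀ s ∈ Ioi (0:ℝ), ∀ t ∈ Ioi (0:ℝ), φ t ≤ max 1 (t / s) * φ s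

/-- The dilation function `s_φ(t) = sup_{r>0} φ(rt)/φ(r)` of `φ`. -/
def dilationFn (φ : ℝ → ℝ) (t : ℝ) : ℝ := ⨆ r : {r : ℝ // 0 < r}, φ (r.1 * t) / φ r.1

open Real Topology

section Fekete

variable {f : ℝ → ℝ}

lemma exists_nat_mul_add_mem_Ioc {a u : ℝ} (ha : 0 < a) (hu : 0 < u) :
    ∃ n : ℕ, ∃ r ∈ Ioc 0 a, u = n * a + r := by
  have hceil : 1 ≤ ⌈u / a⌉₊ := Nat.one_le_iff_ne_zero.2 (by positivity)
  refine ⟨⌈u / a⌉₊ - 1, u - (⌈u / a⌉₊ - 1 : ℕ) * a, ⟨?_, ?_⟩, by ring⟩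
  · have := Nat.ceil_lt_add_one (div_pos hu ha).le
    rw [Nat.cast_sub hceil, Nat.cast_one]
    nlinarith [(lt_div_iff₀ ha).1 (by linarith : (⌈u / a⌉₊ : ℝ) - 1 < u / a)]
  · have := (div_le_iff₀ ha).1 (Nat.le_ceil (u / a))
    rw [Nat.cast_sub hceil, Nat.cast_one]
    linarith

lemma subadditive_nat_mul_add_le (hsub : ∀ u v, 0 < u → 0 < v → f (u + v) ≤ f u + f v)
    {a r : ℝ} (ha : 0 < a) (hr : 0 < r) (n : ℕ) : f (n * a + r) ≤ n * f a + f r := by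
  induction n with
  | zero => simp
  | succ n ih =>
    calc f ((n + 1 : ℕ) * a + r) = f (a + (n * a + r)) := by push_cast; ring_nf
      _ ≤ f a + f (n * a + r) := hsub _ _ ha (by positivity)
      _ ≤ (n + 1 : ℕ) * f a + f r := by push_cast; linarith

lemma subadditive_le_mul_div_add (hsub : ∀ u v, 0 < u → 0 < v → f (u + v) ≤ f u + f v)
    (hbd : ∀ u, 0 < u → |f u| ≤ u) {a u : ℝ} (ha : 0 < a) (hu : 0 < u) :
    f u ≤ u * (f a / a) + 2 * a := by
  obtain ⟨n, r, ⟨hr0, hra⟩, rfl⟩ := exists_nat_mul_add_mem_Ioc ha hu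
  have hfr : f r ≤ a := (le_abs_self _).trans ((hbd r hr0).trans hra)
  have hfa : -a ≤ f a := (abs_le.1 (hbd a ha)).1
  have hexpand : (n * a + r) * (f a / a) = n * f a + r * (f a / a) := by field_simp
  have hrem : -a ≤ r * (f a / a) := by
    rw [← mul_div_assoc, le_div_iff₀ ha]
    nlinarith
  linarith [subadditive_nat_mul_add_le hsub ha hr0 n]

/-- Fekete's lemma for subadditive functions of a positive real variable. -/
theorem tendsto_div_iInf_of_subadditive
    (hsub : ∀ u v, 0 < u → 0 < v → f (u + v) ≤ f u + f v) (hbd : ∀ u, 0 < u → |f u| ≤ u) :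
    Tendsto (fun u => f u / u) atTop (𝓝 (⨅ u : Ioi (0 : ℝ), f u / u)) := by
  have hbdd : BddBelow (range fun u : Ioi (0 : ℝ) => f u / u) := by
    refine ⟨-1, ?_⟩
    rintro _ ⟨⟨u, hu⟩, rfl⟩
    rw [le_div_iff₀ hu]
    linarith [(abs_le.1 (hbd u hu)).1]
  refine tendsto_order.2 ⟨fun m hm => ?_, fun M hM => ?_⟩
  · filter_upwards [eventually_gt_atTop 0] with u hu
    exact hm.trans_le (ciInf_le hbdd ⟨u, hu⟩)
  · obtain ⟨⟨a, ha⟩, haM⟩ := exists_lt_of_ciInf_lt hM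
    have hsmall : Tendsto (fun u => f a / a + 2 * a * u⁻¹) atTop (𝓝 (f a / a)) := by
      simpa using tendsto_inv_atTop_zero.const_mul (2 * a) |>.const_add (f a / a)
    filter_upwards [hsmall.eventually (gt_mem_nhds haM), eventually_gt_atTop 0] with u hlt hu
    refine lt_of_le_of_lt ?_ hlt
    rw [div_le_iff₀ hu]
    have hle := subadditive_le_mul_div_add hsub hbd ha hu
    have hcancel : 2 * a * u⁻¹ * u = 2 * a := by field_simp
    nlinarith

end Fekete

section Submultiplicative

variable {g : ℝ → ℝ}

lemma log_pow_succ_le_of_submultiplicative (hg₀ : ∀ t, 0 < t → 0 < g t)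
    (hg : ∀ a b, 0 < a → 0 < b → g (a * b) ≤ g a * g b) {b : ℝ} (hb : 0 < b) (k : ℕ) :
    log (g (b ^ (k + 1))) ≤ (k + 1) * log (g b) := by
  induction k with
  | zero => simp
  | succ k ih =>
    have hmul : g (b ^ (k + 1 + 1)) ≤ g (b ^ (k + 1)) * g b := by
      rw [pow_succ _ (k + 1)]; exact hg _ _ (by positivity) hb
    calc log (g (b ^ (k + 1 + 1))) ≤ log (g (b ^ (k + 1)) * g b) :=
          log_le_log (hg₀ _ (by positivity)) hmul
      _ = log (g (b ^ (k + 1))) + log (g b) :=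
          log_mul (hg₀ _ (by positivity)).ne' (hg₀ _ hb).ne'
      _ ≤ ((k + 1 : ℕ) + 1) * log (g b) := by push_cast at ih ⊢; linarith

theorem exists_tendsto_log_div_log_atTop_of_submultiplicative (hg₀ : ∀ t, 0 < t → 0 < g t)
    (hg : ∀ a b, 0 < a → 0 < b → g (a * b) ≤ g a * g b)
    (hbd : ∀ t, 0 < t → |log (g t)| ≤ |log t|) :
    ∃ β, Tendsto (fun t => log (g t) / log t) atTop (𝓝 β) := by
  set F : ℝ → ℝ := fun u => log (g (exp u))
  have hsub : ∀ u v, 0 < u → 0 < v → F (u + v) ≤ F u + F v := fun u v _ _ => by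
    simp only [F, exp_add]
    rw [← log_mul (hg₀ _ (exp_pos u)).ne' (hg₀ _ (exp_pos v)).ne']
    exact log_le_log (hg₀ _ (by positivity)) (hg _ _ (exp_pos u) (exp_pos v))
  have hFbd : ∀ u, 0 < u → |F u| ≤ u := fun u hu => by
    simpa [F, abs_of_pos hu] using hbd (exp u) (exp_pos u)
  refine ⟨_, ((tendsto_div_iInf_of_subadditive hsub hFbd).comp tendsto_log_atTop).congr' ?_⟩
  filter_upwards [eventually_gt_atTop 0] with t ht
  simp [F, exp_log ht]

theorem exists_tendsto_log_div_log_nhdsGT_zero_of_submultiplicative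
    (hg₀ : ∀ t, 0 < t → 0 < g t) (hg : ∀ a b, 0 < a → 0 < b → g (a * b) ≤ g a * g b)
    (hbd : ∀ t, 0 < t → |log (g t)| ≤ |log t|) :
    ∃ α, Tendsto (fun t => log (g t) / log t) (𝓝[>] 0) (𝓝 α) := by
  obtain ⟨β, hβ⟩ := exists_tendsto_log_div_log_atTop_of_submultiplicative (g := fun t => g t⁻¹)
    (fun t ht => hg₀ _ (inv_pos.2 ht))
    (fun a b ha hb => by rw [mul_inv]; exact hg _ _ (inv_pos.2 ha) (inv_pos.2 hb))
    (fun t ht => by simpa [Real.log_inv] using hbd _ (inv_pos.2 ht))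
  refine ⟨-β, (hβ.comp tendsto_inv_nhdsGT_zero).neg.congr' ?_⟩
  filter_upwards with t
  simp [Real.log_inv, div_neg]

lemma le_log_div_log_of_submultiplicative (hg₀ : ∀ t, 0 < t → 0 < g t)
    (hg : ∀ a b, 0 < a → 0 < b → g (a * b) ≤ g a * g b) {β : ℝ}
    (hβ : Tendsto (fun t => log (g t) / log t) atTop (𝓝 β)) {b : ℝ} (hb : 1 < b) :
    β ≤ log (g b) / log b := by
  have hb₀ : 0 < b := one_pos.trans hb
  have hpow : Tendsto (fun k : ℕ => b ^ (k + 1)) atTop atTop :=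
    (tendsto_pow_atTop_atTop_of_one_lt hb).comp (tendsto_add_atTop_nat 1)
  refine le_of_tendsto (hβ.comp hpow) (Eventually.of_forall fun k => ?_)
  have hk : (k + 1 : ℝ) ≠ 0 := by positivity
  calc log (g (b ^ (k + 1))) / log (b ^ (k + 1))
      ≤ (k + 1) * log (g b) / ((k + 1) * log b) := by
        rw [Real.log_pow, Nat.cast_succ]
        exact div_le_div_of_nonneg_right (log_pow_succ_le_of_submultiplicative hg₀ hg hb₀ k)
          (by positivity [log_pos hb])
    _ = log (g b) / log b := mul_div_mul_left _ _ hk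

lemma log_div_log_le_of_submultiplicative (hg₀ : ∀ t, 0 < t → 0 < g t)
    (hg : ∀ a b, 0 < a → 0 < b → g (a * b) ≤ g a * g b) {α : ℝ}
    (hα : Tendsto (fun t => log (g t) / log t) (𝓝[>] 0) (𝓝 α)) {a : ℝ} (ha₀ : 0 < a)
    (ha₁ : a < 1) :
    log (g a) / log a ≤ α := by
  have hpow : Tendsto (fun k : ℕ => a ^ (k + 1)) atTop (𝓝[>] 0) :=
    (tendsto_pow_atTop_nhdsWithin_zero_of_lt_one ha₀ ha₁).comp (tendsto_add_atTop_nat 1)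
  refine ge_of_tendsto (hα.comp hpow) (Eventually.of_forall fun k => ?_)
  have hk : (k + 1 : ℝ) ≠ 0 := by positivity
  calc log (g a) / log a = (k + 1) * log (g a) / ((k + 1) * log a) :=
        (mul_div_mul_left _ _ hk).symm
    _ ≤ log (g (a ^ (k + 1))) / log (a ^ (k + 1)) := by
        rw [Real.log_pow, Nat.cast_succ]
        refine div_le_div_of_nonpos_of_le ?_ (log_pow_succ_le_of_submultiplicative hg₀ hg ha₀ k)
        nlinarith [log_neg ha₀ ha₁]

lemma exists_lt_self_of_tendsto_log_div_log_atTop {β : ℝ}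
    (hβ : Tendsto (fun t => log (g t) / log t) atTop (𝓝 β)) (hβ₁ : β < 1) :
    ∃ b, 1 < b ∧ g b < b := by
  obtain ⟨b, hlt, hb⟩ := ((hβ.eventually (gt_mem_nhds hβ₁)).and (eventually_gt_atTop 1)).exists
  refine ⟨b, hb, not_le.1 fun hge => hlt.not_ge ?_⟩
  rw [le_div_iff₀ (log_pos hb), one_mul]
  exact log_le_log (one_pos.trans hb) hge

lemma exists_lt_one_of_tendsto_log_div_log_nhdsGT_zero {α : ℝ}
    (hα : Tendsto (fun t => log (g t) / log t) (𝓝[>] 0) (𝓝 α)) (hα₀ : 0 < α) :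
    ∃ a, 0 < a ∧ a < 1 ∧ g a < 1 := by
  obtain ⟨a, hlt, ha₁, ha₀⟩ := ((hα.eventually (lt_mem_nhds hα₀)).and
    (((eventually_lt_nhds one_pos).filter_mono nhdsWithin_le_nhds).and
      self_mem_nhdsWithin)).exists
  refine ⟨a, ha₀, ha₁, not_le.1 fun hge => hlt.not_ge ?_⟩
  exact div_nonpos_of_nonneg_of_nonpos (log_nonneg hge) (log_neg ha₀ ha₁).le

end Submultiplicative

section Integrals

lemma setLIntegral_le_ofReal_div_one_sub_of_subset_iUnion {α : Type*} [MeasurableSpace α]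
    {μ : Measure α} {f : α → ℝ≥0∞} {S : Set α} {A : ℕ → Set α} {M q : ℝ}
    (hS : S ⊆ ⋃ k, A k) (hA : ∀ k, ∫⁻ x in A k, f x ∂μ ≤ ENNReal.ofReal (M * q ^ k))
    (hM : 0 ≤ M) (hq₀ : 0 ≤ q) (hq₁ : q < 1) :
    ∫⁻ x in S, f x ∂μ ≤ ENNReal.ofReal (M / (1 - q)) :=
  calc ∫⁻ x in S, f x ∂μ ≤ ∑' k, ∫⁻ x in A k, f x ∂μ :=
        (lintegral_mono_set hS).trans (lintegral_iUnion_le _ _)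
    _ ≤ ∑' k, ENNReal.ofReal (M * q ^ k) := ENNReal.tsum_le_tsum hA
    _ = ENNReal.ofReal (M / (1 - q)) := by
        rw [← ENNReal.ofReal_tsum_of_nonneg (fun k => by positivity)
          ((summable_geometric_of_lt_one hq₀ hq₁).mul_left M), _root_.tsum_mul_left,
          tsum_geometric_of_lt_one hq₀ hq₁, div_eq_mul_inv]

lemma setLIntegral_le_ofReal_mul_sub {g : ℝ → ℝ} {S : Set ℝ} {M x y : ℝ} (hS : MeasurableSet S)
    (hSxy : S ⊆ Icc x y) (hxy : x ≤ y) (hg : ∀ s ∈ S, g s ≤ M) :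
    ∫⁻ s in S, ENNReal.ofReal (g s) ≤ ENNReal.ofReal (M * (y - x)) :=
  calc ∫⁻ s in S, ENNReal.ofReal (g s) ≤ ∫⁻ _ in S, ENNReal.ofReal M :=
        setLIntegral_mono' hS fun s hs => ENNReal.ofReal_le_ofReal (hg s hs)
    _ ≤ ENNReal.ofReal M * volume (Icc x y) := by
        rw [setLIntegral_const]; gcongr
    _ = ENNReal.ofReal (M * (y - x)) := by
        rw [Real.volume_Icc, ENNReal.ofReal_mul' (sub_nonneg.2 hxy)]

lemma ofReal_mul_log_div_le_setLIntegral_Ioc {g : ℝ → ℝ} {c x y : ℝ} (hc : 0 ≤ c)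
    (hx : 0 < x) (hxy : x ≤ y) (hg : ∀ s ∈ Ioc x y, c / s ≤ g s) :
    ENNReal.ofReal (c * log (y / x)) ≤ ∫⁻ s in Ioc x y, ENNReal.ofReal (g s) := by
  have hint : IntegrableOn (fun s => c / s) (Ioc x y) :=
    (continuousOn_const.div continuousOn_id fun s hs => (hx.trans_le hs.1).ne').integrableOn_Icc
      |>.mono_set Ioc_subset_Icc_self
  calc ENNReal.ofReal (c * log (y / x)) = ENNReal.ofReal (∫ s in Ioc x y, c / s) := by
        simp_rw [← intervalIntegral.integral_of_le hxy, div_eq_mul_inv c,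
          intervalIntegral.integral_const_mul, integral_inv_of_pos hx (hx.trans_le hxy)]
    _ = ∫⁻ s in Ioc x y, ENNReal.ofReal (c / s) := by
        refine ofReal_integral_eq_lintegral_ofReal hint ?_
        filter_upwards [ae_restrict_mem measurableSet_Ioc] with s hs
        exact div_nonneg hc (hx.trans hs.1).le
    _ ≤ ∫⁻ s in Ioc x y, ENNReal.ofReal (g s) :=
        setLIntegral_mono' measurableSet_Ioc fun s hs => ENNReal.ofReal_le_ofReal (hg s hs)

lemma Ioc_zero_subset_iUnion_Ioc_mul_pow {a t : ℝ} (ha₀ : 0 < a) (ha₁ : a < 1) :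
    Ioc 0 t ⊆ ⋃ k : ℕ, Ioc (t * a ^ (k + 1)) (t * a ^ k) := by
  rintro s ⟨hs, hst⟩
  obtain ⟨k, hk⟩ := exists_nat_pow_near ((one_le_div hs).2 hst) (one_lt_inv₀ ha₀ |>.2 ha₁)
  rw [inv_pow, inv_pow, ← one_div, ← one_div, div_le_div_iff₀ (by positivity) hs,
    div_lt_div_iff₀ hs (by positivity)] at hk
  exact mem_iUnion.2 ⟨k, by linarith [hk.2], by linarith [hk.1]⟩

lemma Ioi_subset_iUnion_Ico_mul_pow {b t : ℝ} (hb : 1 < b) (ht : 0 < t) :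
    Ioi t ⊆ ⋃ k : ℕ, Ico (t * b ^ k) (t * b ^ (k + 1)) := by
  intro s hs
  obtain ⟨k, hk⟩ := exists_nat_pow_near ((one_le_div ht).2 (le_of_lt hs)) hb
  rw [le_div_iff₀ ht, div_lt_iff₀ ht] at hk
  exact mem_iUnion.2 ⟨k, by linarith [hk.1], by linarith [hk.2]⟩

end Integrals

lemma dilationFn_le_of_forall_le {φ : ℝ → ℝ} (hφ₀ : ∀ t ∈ Ioi (0 : ℝ), 0 < φ t)
    {t c : ℝ} (h : ∀ r, 0 < r → φ (r * t) ≤ c * φ r) : dilationFn φ t ≤ c := by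
  have : Nonempty {r : ℝ // 0 < r} := ⟨⟨1, one_pos⟩⟩
  exact ciSup_le fun r => (div_le_iff₀ (hφ₀ r r.2)).2 (h r r.2)

namespace QuasiConcaveOn

variable {φ : ℝ → ℝ}

lemma apply_le_apply (hφ : QuasiConcaveOn φ) {s t : ℝ} (hs : 0 < s) (hst : s ≤ t) :
    φ s ≤ φ t :=
  hφ.1 hs (hs.trans_le hst) hst

lemma apply_div_le_apply_div (hφ : QuasiConcaveOn φ) {s t : ℝ} (hs : 0 < s) (hst : s ≤ t) :
    φ t / t ≤ φ s / s := by
  have ht : 0 < t := hs.trans_le hst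
  have h := hφ.2 s hs t ht
  rw [max_eq_right ((one_le_div hs).2 hst)] at h
  rw [div_le_div_iff₀ ht hs]
  calc φ t * s ≤ t / s * φ s * s := by gcongr
    _ = φ s * t := by field_simp

lemma apply_mul_le (hφ : QuasiConcaveOn φ) {r t : ℝ} (hr : 0 < r) (ht : 0 < t) :
    φ (r * t) ≤ max 1 t * φ r := by
  simpa [hr.ne'] using hφ.2 r hr (r * t) (mul_pos hr ht)

lemma bddAbove_range_div (hφ : QuasiConcaveOn φ) (hφ₀ : ∀ t ∈ Ioi (0 : ℝ), 0 < φ t) {t : ℝ}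
    (ht : 0 < t) : BddAbove (range fun r : {r : ℝ // 0 < r} => φ (r.1 * t) / φ r.1) :=
  ⟨max 1 t, by
    rintro _ ⟨r, rfl⟩
    exact (div_le_iff₀ (hφ₀ r r.2)).2 (hφ.apply_mul_le r.2 ht)⟩

lemma dilationFn_le_max (hφ : QuasiConcaveOn φ) (hφ₀ : ∀ t ∈ Ioi (0 : ℝ), 0 < φ t) {t : ℝ}
    (ht : 0 < t) : dilationFn φ t ≤ max 1 t :=
  dilationFn_le_of_forall_le hφ₀ fun _ hr => hφ.apply_mul_le hr ht

lemma apply_mul_le_dilationFn_mul (hφ : QuasiConcaveOn φ) (hφ₀ : ∀ t ∈ Ioi (0 : ℝ), 0 < φ t)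
    {r t : ℝ} (hr : 0 < r) (ht : 0 < t) : φ (r * t) ≤ dilationFn φ t * φ r :=
  (div_le_iff₀ (hφ₀ r hr)).1 (le_ciSup (hφ.bddAbove_range_div hφ₀ ht) ⟨r, hr⟩)

lemma min_le_dilationFn (hφ : QuasiConcaveOn φ) (hφ₀ : ∀ t ∈ Ioi (0 : ℝ), 0 < φ t) {t : ℝ}
    (ht : 0 < t) : min 1 t ≤ dilationFn φ t := by
  have hφ₁ : 0 < φ 1 := hφ₀ 1 (mem_Ioi.2 one_pos)
  refine le_trans ?_ (le_ciSup (hφ.bddAbove_range_div hφ₀ ht) ⟨1, one_pos⟩)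
  rw [one_mul, le_div_iff₀ hφ₁]
  rcases le_total t 1 with h | h
  · rw [min_eq_right h]
    simpa [le_div_iff₀ ht, mul_comm] using hφ.apply_div_le_apply_div ht h
  · rw [min_eq_left h, one_mul]
    exact hφ.apply_le_apply one_pos h

lemma dilationFn_pos (hφ : QuasiConcaveOn φ) (hφ₀ : ∀ t ∈ Ioi (0 : ℝ), 0 < φ t) {t : ℝ}
    (ht : 0 < t) : 0 < dilationFn φ t :=
  (lt_min one_pos ht).trans_le (hφ.min_le_dilationFn hφ₀ ht)

lemma abs_log_dilationFn_le (hφ : QuasiConcaveOn φ) (hφ₀ : ∀ t ∈ Ioi (0 : ℝ), 0 < φ t)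
    {t : ℝ} (ht : 0 < t) : |log (dilationFn φ t)| ≤ |log t| := by
  have hlo := log_le_log (lt_min one_pos ht) (hφ.min_le_dilationFn hφ₀ ht)
  have hhi := log_le_log (hφ.dilationFn_pos hφ₀ ht) (hφ.dilationFn_le_max hφ₀ ht)
  rcases le_total t 1 with h | h
  · rw [min_eq_right h] at hlo
    rw [max_eq_left h, Real.log_one] at hhi
    rw [abs_of_nonpos hhi, abs_of_nonpos (log_nonpos ht.le h)]
    linarith
  · rw [min_eq_left h, Real.log_one] at hlo
    rw [max_eq_right h] at hhi
    rw [abs_of_nonneg hlo, abs_of_nonneg (log_nonneg h)]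
    exact hhi

lemma dilationFn_mul_le (hφ : QuasiConcaveOn φ) (hφ₀ : ∀ t ∈ Ioi (0 : ℝ), 0 < φ t)
    {a b : ℝ} (ha : 0 < a) (hb : 0 < b) :
    dilationFn φ (a * b) ≤ dilationFn φ a * dilationFn φ b := by
  refine dilationFn_le_of_forall_le hφ₀ fun r hr => ?_
  calc φ (r * (a * b)) = φ (r * b * a) := by ring_nf
    _ ≤ dilationFn φ a * φ (r * b) := hφ.apply_mul_le_dilationFn_mul hφ₀ (by positivity) ha
    _ ≤ dilationFn φ a * (dilationFn φ b * φ r) := by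
        gcongr
        · exact (hφ.dilationFn_pos hφ₀ ha).le
        · exact hφ.apply_mul_le_dilationFn_mul hφ₀ hr hb
    _ = dilationFn φ a * dilationFn φ b * φ r := by ring

lemma apply_mul_pow_le (hφ : QuasiConcaveOn φ) (hφ₀ : ∀ t ∈ Ioi (0 : ℝ), 0 < φ t)
    {a t : ℝ} (ha : 0 < a) (ht : 0 < t) (k : ℕ) :
    φ (t * a ^ k) ≤ dilationFn φ a ^ k * φ t := by
  induction k with
  | zero => simp
  | succ k ih =>
    calc φ (t * a ^ (k + 1)) = φ (t * a ^ k * a) := by ring_nf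
      _ ≤ dilationFn φ a * φ (t * a ^ k) :=
          hφ.apply_mul_le_dilationFn_mul hφ₀ (by positivity) ha
      _ ≤ dilationFn φ a * (dilationFn φ a ^ k * φ t) := by
          gcongr
          exact (hφ.dilationFn_pos hφ₀ ha).le
      _ = dilationFn φ a ^ (k + 1) * φ t := by ring

theorem exists_tendsto_upperIndex (hφ : QuasiConcaveOn φ)
    (hφ₀ : ∀ t ∈ Ioi (0 : ℝ), 0 < φ t) :
    ∃ β, Tendsto (fun t => log (dilationFn φ t) / log t) atTop (𝓝 β) :=
  exists_tendsto_log_div_log_atTop_of_submultiplicative (fun _ ht => hφ.dilationFn_pos hφ₀ ht)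
    (fun _ _ ha hb => hφ.dilationFn_mul_le hφ₀ ha hb) fun _ ht => hφ.abs_log_dilationFn_le hφ₀ ht

theorem exists_tendsto_lowerIndex (hφ : QuasiConcaveOn φ)
    (hφ₀ : ∀ t ∈ Ioi (0 : ℝ), 0 < φ t) :
    ∃ α, Tendsto (fun t => log (dilationFn φ t) / log t) (𝓝[>] 0) (𝓝 α) :=
  exists_tendsto_log_div_log_nhdsGT_zero_of_submultiplicative
    (fun _ ht => hφ.dilationFn_pos hφ₀ ht) (fun _ _ ha hb => hφ.dilationFn_mul_le hφ₀ ha hb)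
    fun _ ht => hφ.abs_log_dilationFn_le hφ₀ ht

lemma lowerIndex_pos_of_dilationFn_lt_one (hφ : QuasiConcaveOn φ)
    (hφ₀ : ∀ t ∈ Ioi (0 : ℝ), 0 < φ t) {α : ℝ}
    (hα : Tendsto (fun t => log (dilationFn φ t) / log t) (𝓝[>] 0) (𝓝 α)) {a : ℝ}
    (ha₀ : 0 < a) (ha₁ : a < 1) (hsa : dilationFn φ a < 1) : 0 < α :=
  (div_pos_of_neg_of_neg (log_neg (hφ.dilationFn_pos hφ₀ ha₀) hsa) (log_neg ha₀ ha₁)).trans_le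
    (log_div_log_le_of_submultiplicative (fun _ ht => hφ.dilationFn_pos hφ₀ ht)
      (fun _ _ ha hb => hφ.dilationFn_mul_le hφ₀ ha hb) hα ha₀ ha₁)

lemma upperIndex_lt_one_of_dilationFn_lt_self (hφ : QuasiConcaveOn φ)
    (hφ₀ : ∀ t ∈ Ioi (0 : ℝ), 0 < φ t) {β : ℝ}
    (hβ : Tendsto (fun t => log (dilationFn φ t) / log t) atTop (𝓝 β)) {b : ℝ}
    (hb : 1 < b) (hsb : dilationFn φ b < b) : β < 1 :=
  (le_log_div_log_of_submultiplicative (fun _ ht => hφ.dilationFn_pos hφ₀ ht)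
      (fun _ _ ha hb => hφ.dilationFn_mul_le hφ₀ ha hb) hβ hb).trans_lt
    ((div_lt_one (log_pos hb)).2 (log_lt_log (hφ.dilationFn_pos hφ₀ (one_pos.trans hb)) hsb))

lemma lintegral_Ioc_zero_le_of_dilationFn_lt_one (hφ : QuasiConcaveOn φ)
    (hφ₀ : ∀ t ∈ Ioi (0 : ℝ), 0 < φ t) {a : ℝ} (ha₀ : 0 < a) (ha₁ : a < 1)
    (hsa : dilationFn φ a < 1) :
    ∃ C : ℝ, ∀ t ∈ Ioi (0 : ℝ),
      ∫⁻ s in Ioc 0 t, ENNReal.ofReal (φ s / s) ≤ ENNReal.ofReal (C * φ t) := by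
  set c := dilationFn φ a
  have hc : 0 < c := hφ.dilationFn_pos hφ₀ ha₀
  refine ⟨(1 - a) / a / (1 - c), fun t (ht : 0 < t) => ?_⟩
  have hφt : 0 < φ t := hφ₀ t ht
  rw [div_mul_eq_mul_div]
  refine setLIntegral_le_ofReal_div_one_sub_of_subset_iUnion
    (Ioc_zero_subset_iUnion_Ioc_mul_pow ha₀ ha₁) (fun k => ?_) ?_ hc.le hsa
  have hlo : 0 < t * a ^ (k + 1) := by positivity
  have hle : t * a ^ (k + 1) ≤ t * a ^ k :=
    mul_le_mul_of_nonneg_left (pow_le_pow_of_le_one ha₀.le ha₁.le k.le_succ) ht.le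
  refine (setLIntegral_le_ofReal_mul_sub measurableSet_Ioc Ioc_subset_Icc_self hle
    fun s hs => div_le_div₀ (hφ₀ _ (mem_Ioi.2 (by positivity))).le
      (hφ.apply_le_apply (hlo.trans hs.1) hs.2) hlo hs.1.le).trans
    (ENNReal.ofReal_le_ofReal ?_)
  calc φ (t * a ^ k) / (t * a ^ (k + 1)) * (t * a ^ k - t * a ^ (k + 1))
      = (1 - a) / a * φ (t * a ^ k) := by field_simp; ring
    _ ≤ (1 - a) / a * (c ^ k * φ t) := by
        gcongr
        exact hφ.apply_mul_pow_le hφ₀ ha₀ ht k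
    _ = (1 - a) / a * φ t * c ^ k := by ring
  · have := sub_pos.2 ha₁
    positivity

lemma lintegral_Ioi_le_of_dilationFn_lt_self (hφ : QuasiConcaveOn φ)
    (hφ₀ : ∀ t ∈ Ioi (0 : ℝ), 0 < φ t) {b : ℝ} (hb : 1 < b) (hsb : dilationFn φ b < b) :
    ∃ C : ℝ, ∀ t ∈ Ioi (0 : ℝ),
      ∫⁻ s in Ioi t, ENNReal.ofReal (φ s / s ^ 2) ≤ ENNReal.ofReal (C * (φ t / t)) := by
  set c := dilationFn φ b
  have hb₀ : 0 < b := one_pos.trans hb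
  have hc : 0 < c := hφ.dilationFn_pos hφ₀ hb₀
  refine ⟨c * (b - 1) / (1 - c / b), fun t (ht : 0 < t) => ?_⟩
  have hφt : 0 < φ t := hφ₀ t ht
  rw [div_mul_eq_mul_div]
  refine setLIntegral_le_ofReal_div_one_sub_of_subset_iUnion
    (Ioi_subset_iUnion_Ico_mul_pow hb ht) (fun k => ?_) ?_ (by positivity)
    ((div_lt_one hb₀).2 hsb)
  have hlo : 0 < t * b ^ k := by positivity
  have hle : t * b ^ k ≤ t * b ^ (k + 1) := by
    gcongr; exacts [hb.le, k.le_succ]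
  refine (setLIntegral_le_ofReal_mul_sub measurableSet_Ico Ico_subset_Icc_self hle
    fun s hs => div_le_div₀ (hφ₀ _ (mem_Ioi.2 (by positivity))).le
      (hφ.apply_le_apply (hlo.trans_le hs.1) hs.2.le) (by positivity)
      (pow_le_pow_left₀ hlo.le hs.1 2)).trans
    (ENNReal.ofReal_le_ofReal ?_)
  calc φ (t * b ^ (k + 1)) / (t * b ^ k) ^ 2 * (t * b ^ (k + 1) - t * b ^ k)
      = (b - 1) / (t * b ^ k) * φ (t * b ^ (k + 1)) := by field_simp; ring
    _ ≤ (b - 1) / (t * b ^ k) * (c ^ (k + 1) * φ t) := by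
        gcongr
        exact hφ.apply_mul_pow_le hφ₀ hb₀ ht (k + 1)
    _ = c * (b - 1) * (φ t / t) * (c / b) ^ k := by rw [div_pow]; field_simp; ring
  · have := sub_pos.2 hb
    positivity

lemma exists_dilationFn_lt_one_of_lintegral_Ioc_zero_le (hφ : QuasiConcaveOn φ)
    (hφ₀ : ∀ t ∈ Ioi (0 : ℝ), 0 < φ t)
    (hC : ∃ C : ℝ, ∀ t ∈ Ioi (0 : ℝ),
      ∫⁻ s in Ioc 0 t, ENNReal.ofReal (φ s / s) ≤ ENNReal.ofReal (C * φ t)) :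
    ∃ a, 0 < a ∧ a < 1 ∧ dilationFn φ a < 1 := by
  obtain ⟨C, hC⟩ := hC
  set L := |C| + 1
  have hL : 0 < L := by positivity
  refine ⟨exp (-L), exp_pos _, Real.exp_lt_one_iff.2 (neg_neg_of_pos hL), ?_⟩
  have key : ∀ r, 0 < r → φ (r * exp (-L)) ≤ C / L * φ r := fun r hr => by
    have hra : 0 < r * exp (-L) := by positivity
    have hlog : log (r / (r * exp (-L))) = L := by
      rw [div_mul_cancel_left₀ hr.ne', ← exp_neg, neg_neg, log_exp]
    have hint := (ofReal_mul_log_div_le_setLIntegral_Ioc (hφ₀ _ hra).le hra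
      (mul_le_of_le_one_right hr.le (exp_le_one_iff.2 (by linarith)))
      fun s hs => div_le_div_of_nonneg_right (hφ.apply_le_apply hra hs.1.le)
        (hra.trans hs.1).le).trans
      ((lintegral_mono_set (Ioc_subset_Ioc_left hra.le)).trans (hC r hr))
    rw [hlog, ENNReal.ofReal_le_ofReal_iff'] at hint
    rw [div_mul_eq_mul_div, le_div_iff₀ hL]
    exact hint.resolve_right (not_le.2 (mul_pos (hφ₀ _ hra) hL))
  refine (dilationFn_le_of_forall_le hφ₀ key).trans_lt ((div_lt_one hL).2 ?_)
  linarith [le_abs_self C]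

lemma exists_dilationFn_lt_self_of_lintegral_Ioi_le (hφ : QuasiConcaveOn φ)
    (hφ₀ : ∀ t ∈ Ioi (0 : ℝ), 0 < φ t)
    (hC : ∃ C : ℝ, ∀ t ∈ Ioi (0 : ℝ),
      ∫⁻ s in Ioi t, ENNReal.ofReal (φ s / s ^ 2) ≤ ENNReal.ofReal (C * (φ t / t))) :
    ∃ b, 1 < b ∧ dilationFn φ b < b := by
  obtain ⟨C, hC⟩ := hC
  set L := |C| + 1
  have hL : 0 < L := by positivity
  refine ⟨exp L, one_lt_exp_iff.2 hL, ?_⟩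
  have key : ∀ r, 0 < r → φ (r * exp L) ≤ C / L * exp L * φ r := fun r hr => by
    have hrb : 0 < r * exp L := by positivity
    have hlog : log (r * exp L / r) = L := by rw [mul_div_cancel_left₀ _ hr.ne', log_exp]
    have hint := (ofReal_mul_log_div_le_setLIntegral_Ioc (div_pos (hφ₀ _ hrb) hrb).le hr
      (le_mul_of_one_le_right hr.le (one_le_exp hL.le))
      fun s hs => by
        have hs₀ : 0 < s := hr.trans hs.1
        calc φ (r * exp L) / (r * exp L) / s ≤ φ s / s / s :=
              div_le_div_of_nonneg_right (hφ.apply_div_le_apply_div hs₀ hs.2) hs₀.le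
          _ = φ s / s ^ 2 := by rw [div_div, sq]).trans
      ((lintegral_mono_set Ioc_subset_Ioi_self).trans (hC r hr))
    rw [hlog, ENNReal.ofReal_le_ofReal_iff'] at hint
    calc φ (r * exp L) = φ (r * exp L) / (r * exp L) * L * (r * exp L / L) := by field_simp
      _ ≤ C * (φ r / r) * (r * exp L / L) := by
          refine mul_le_mul_of_nonneg_right ?_ (by positivity)
          exact hint.resolve_right (not_le.2 (mul_pos (div_pos (hφ₀ _ hrb) hrb) hL))
      _ = C / L * exp L * φ r := by field_simp
  refine (dilationFn_le_of_forall_le hφ₀ key).trans_lt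
    (mul_lt_of_lt_one_left (exp_pos L) ((div_lt_one hL).2 ?_))
  linarith [le_abs_self C]

end QuasiConcaveOn

/-- The dilation indices always exist as limits (`exists_tendsto_lowerIndex`,
`exists_tendsto_upperIndex`), so `α_φ > 0` and `β_φ < 1` are phrased as the existence of a limit
with that property. -/
theorem statement7 (φ : ℝ → ℝ) (hφ_pos : ∀ t ∈ Ioi (0:ℝ), 0 < φ t)
    (hφ : QuasiConcaveOn φ) :
    ((∃ C : ℝ, ∀ t ∈ Ioi (0:ℝ),
        (∫⁻ s in Ioc (0:ℝ) t, ENNReal.ofReal (φ s / s)) ≤ ENNReal.ofReal (C * φ t)) ↔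
      (∃ α : ℝ, 0 < α ∧
        Tendsto (fun t => Real.log (dilationFn φ t) / Real.log t)
          (nhdsWithin 0 (Ioi 0)) (nhds α))) ∧
    ((∃ C : ℝ, ∀ t ∈ Ioi (0:ℝ),
        (∫⁻ s in Ioi t, ENNReal.ofReal (φ s / s ^ 2)) ≤ ENNReal.ofReal (C * (φ t / t))) ↔
      (∃ β : ℝ, β < 1 ∧
        Tendsto (fun t => Real.log (dilationFn φ t) / Real.log t)
          Filter.atTop (nhds β))) := by
  obtain ⟨α, hα⟩ := hφ.exists_tendsto_lowerIndex hφ_pos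
  obtain ⟨β, hβ⟩ := hφ.exists_tendsto_upperIndex hφ_pos
  refine ⟨⟨fun hC => ?_, fun ⟨α', hα'₀, hα'⟩ => ?_⟩, ⟨fun hC => ?_, fun ⟨β', hβ'₁, hβ'⟩ => ?_⟩⟩
  · obtain ⟨a, ha₀, ha₁, hsa⟩ := hφ.exists_dilationFn_lt_one_of_lintegral_Ioc_zero_le hφ_pos hC
    exact ⟨α, hφ.lowerIndex_pos_of_dilationFn_lt_one hφ_pos hα ha₀ ha₁ hsa, hα⟩
  · obtain ⟨a, ha₀, ha₁, hsa⟩ := exists_lt_one_of_tendsto_log_div_log_nhdsGT_zero hα' hα'₀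
    exact hφ.lintegral_Ioc_zero_le_of_dilationFn_lt_one hφ_pos ha₀ ha₁ hsa
  · obtain ⟨b, hb, hsb⟩ := hφ.exists_dilationFn_lt_self_of_lintegral_Ioi_le hφ_pos hC
    exact ⟨β, hφ.upperIndex_lt_one_of_dilationFn_lt_self hφ_pos hβ hb hsb, hβ⟩
  · obtain ⟨b, hb, hsb⟩ := exists_lt_self_of_tendsto_log_div_log_atTop hβ' hβ'₁
    exact hφ.lintegral_Ioi_le_of_dilationFn_lt_self hφ_pos hb hsb
end
end

section
/- Let (X_0, X_1) be a Banach couple and let A_j be a closed operator on X_j for j = 0,1. Assume A_0 x = A_1 x for all x ∈ D(A_0) ∩ D(A_1), and that there exists λ ∈ ρ(A_0) ∩ ρ(A_1) such that (λ − A_0)^{−1} and (λ − A_1)^{−1} coincide on X_0 ∩ X_1. Let A be the unique linear operator with domain D(A_0) + D(A_1) ⊂ X_0 + X_1 defined by A(x_0 + x_1) = A_0 x_0 + A_1 x_1 for x_j ∈ D(A_j). Then λ ∈ ρ(A), and for every interpolation functor F, the part A_F of A in F(X_0, X_1) is a closed operator and F(D_{A_0}, D_{A_1}) = D_{A_F}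 up to equivalence of norms (D_{A_F} carrying the graph norm of A_F). -/
/-!
Since `R₀` and `R₁` agree on `X₀ ∩ X₁`, they glue to a linear map `R` on `X₀ + X₁`, just as
`A₀` and `A₁` glue to `A` on `D₀ + D₁`; then `R` inverts `λ - A` on both sides, so `λ ∈ ρ(A)`.
The map `R` is admissible from `(X₀, X₁)` to `(D_{A₀}, D_{A₁})`, and the identity and `A` are
admissible in the other direction, so interpolation makes `R : F(X₀,X₁) → F(D_{A₀},D_{A₁})` and
`id, A : F(D_{A₀},D_{A₁}) → F(X₀,X₁)` bounded. Every `z ∈ D(A_F)` is then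
`R (λz - Az) ∈ F(D_{A₀},D_{A₁})`, which gives the equality of domains and norms, and `A_F` is
closed because `λ - A_F` has the bounded inverse `R` on `F(X₀,X₁)`.
-/

open MeasureTheory Set Filter ENNReal NNReal

noncomputable section

/-- A Banach space realized as a subspace of an ambient vector space `Z`: a carrier
submodule together with a complete norm on it.  Banach couples are encoded as pairs of
such spaces inside a common ambient space. -/
structure NSpace (Z : Type*) [AddCommGroup Z] [Module ℂ Z] where
  car : Set Z
  N : Z → ℝ
  zero_mem : (0 : Z) ∈ car
  add_mem : ∀ {x y : Z}, x ∈ car → y ∈ car → x + y ∈ car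
  smul_mem : ∀ (c : ℂ) {x : Z}, x ∈ car → c • x ∈ car
  nonneg : ∀ x : Z, 0 ≤ N x
  triangle : ∀ {x y : Z}, x ∈ car → y ∈ car → N (x + y) ≤ N x + N y
  homog : ∀ (c : ℂ) {x : Z}, x ∈ car → N (c • x) = ‖c‖ * N x
  definite : ∀ {x : Z}, x ∈ car → N x = 0 → x = 0
  complete : ∀ u : ℕ → Z, (∀ n, u n ∈ car) →
    (∀ ε : ℝ, 0 < ε → ∃ n₀ : ℕ, ∀ m ≥ n₀, ∀ k ≥ n₀, N (u m - u k) < ε) →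
    ∃ x ∈ car, Tendsto (fun n => N (u n - x)) atTop (nhds 0)

variable {Z : Type*} [AddCommGroup Z] [Module ℂ Z]

/-- The sum space `X₀ + X₁` of a couple, given by carriers `(C₀, C₁)`. -/
def sumCar (C₀ C₁ : Set Z) : Set Z := {z | ∃ a ∈ C₀, ∃ b ∈ C₁, z = a + b}

/-- The norm of the sum space `X₀ + X₁` of a couple with carriers `(C₀, C₁)` and norms
`(N₀, N₁)`. -/
def sumN (C₀ : Set Z) (N₀ : Z → ℝ) (C₁ : Set Z) (N₁ : Z → ℝ) (z : Z) : ℝ :=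
  sInf {r : ℝ | ∃ a ∈ C₀, ∃ b ∈ C₁, z = a + b ∧ r = N₀ a + N₁ b}

/-- `F` is an intermediate space of the couple given by carriers `(C₀, C₁)` and norms
`(N₀, N₁)`: `C₀ ∩ C₁ ⊆ F ⊆ C₀ + C₁` with continuous inclusions. -/
def IsIntermediate (C₀ : Set Z) (N₀ : Z → ℝ) (C₁ : Set Z) (N₁ : Z → ℝ)
    (F : NSpace Z) : Prop :=
  (∃ c : ℝ, ∀ z ∈ C₀ ∩ C₁, z ∈ F.car ∧ F.N z ≤ c * max (N₀ z) (N₁ z)) ∧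
  (∃ c : ℝ, ∀ z ∈ F.car, z ∈ sumCar C₀ C₁ ∧ sumN C₀ N₀ C₁ N₁ z ≤ c * F.N z)

namespace NSpace

section Basic

variable (X : NSpace Z)

theorem neg_mem {x : Z} (hx : x ∈ X.car) : -x ∈ X.car := by
  simpa using X.smul_mem (-1) hx

theorem sub_mem {x y : Z} (hx : x ∈ X.car) (hy : y ∈ X.car) : x - y ∈ X.car := by
  simpa [sub_eq_add_neg] using X.add_mem hx (X.neg_mem hy)

theorem N_neg {x : Z} (hx : x ∈ X.car) : X.N (-x) = X.N x := by
  simpa using X.homog (-1) hx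

theorem N_sub_comm {x y : Z} (hx : x ∈ X.car) (hy : y ∈ X.car) :
    X.N (x - y) = X.N (y - x) := by
  rw [← neg_sub, X.N_neg (X.sub_mem hy hx)]

theorem N_smul_sub_le (c : ℂ) {x y : Z} (hx : x ∈ X.car) (hy : y ∈ X.car) :
    X.N (c • x - y) ≤ ‖c‖ * X.N x + X.N y := by
  have hcx := X.smul_mem c hx
  calc X.N (c • x - y) = X.N (c • x + -y) := by rw [sub_eq_add_neg]
    _ ≤ X.N (c • x) + X.N (-y) := X.triangle hcx (X.neg_mem hy)
    _ = ‖c‖ * X.N x + X.N y := by rw [X.homog c hx, X.N_neg hy]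

theorem eq_of_tendsto {u : ℕ → Z} {x x' : Z} (hu : ∀ n, u n ∈ X.car) (hx : x ∈ X.car)
    (hx' : x' ∈ X.car) (h : Tendsto (fun n => X.N (u n - x)) atTop (nhds 0))
    (h' : Tendsto (fun n => X.N (u n - x')) atTop (nhds 0)) : x = x' := by
  have hsum : Tendsto (fun n => X.N (u n - x) + X.N (u n - x')) atTop (nhds 0) := by
    simpa using h.add h'
  have hle : X.N (x - x') ≤ 0 := by
    refine ge_of_tendsto' hsum fun n => ?_
    calc X.N (x - x') = X.N ((x - u n) + (u n - x')) := by rw [sub_add_sub_cancel]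
      _ ≤ X.N (x - u n) + X.N (u n - x') :=
        X.triangle (X.sub_mem hx (hu n)) (X.sub_mem (hu n) hx')
      _ = X.N (u n - x) + X.N (u n - x') := by rw [X.N_sub_comm hx (hu n)]
  exact sub_eq_zero.mp (X.definite (X.sub_mem hx hx') (le_antisymm hle (X.nonneg _)))

end Basic

def BoundedMap (V W : NSpace Z) (S : Z → Z) : Prop :=
  ∃ M : ℝ, ∀ z ∈ V.car, S z ∈ W.car ∧ W.N (S z) ≤ M * V.N z

namespace BoundedMap

variable {U V W : NSpace Z} {S T : Z → Z}

theorem exists_nonneg (h : BoundedMap V W S) :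
    ∃ M : ℝ, 0 ≤ M ∧ ∀ z ∈ V.car, S z ∈ W.car ∧ W.N (S z) ≤ M * V.N z := by
  obtain ⟨M, hM⟩ := h
  exact ⟨max M 0, le_max_right _ _, fun z hz =>
    ⟨(hM z hz).1, (hM z hz).2.trans (by gcongr; exacts [V.nonneg z, le_max_left _ _])⟩⟩

theorem congr (h : BoundedMap V W S) (hST : ∀ z ∈ V.car, S z = T z) : BoundedMap V W T := by
  obtain ⟨M, hM⟩ := h
  exact ⟨M, fun z hz => hST z hz ▸ hM z hz⟩

theorem comp (hS : BoundedMap U V S) (hT : BoundedMap V W T) :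
    BoundedMap U W (fun z => T (S z)) := by
  obtain ⟨MS, -, hMS⟩ := hS.exists_nonneg
  obtain ⟨MT, hMT0, hMT⟩ := hT.exists_nonneg
  refine ⟨MT * MS, fun z hz => ⟨(hMT _ (hMS z hz).1).1, ?_⟩⟩
  calc W.N (T (S z)) ≤ MT * V.N (S z) := (hMT _ (hMS z hz).1).2
    _ ≤ MT * (MS * U.N z) := by gcongr; exact (hMS z hz).2
    _ = MT * MS * U.N z := by ring

end BoundedMap

theorem closed_of_resolvent (W : NSpace Z) {D : Set Z} {T : Z → Z} {R : Z →ₗ[ℂ] Z} {lam : ℂ}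
    (hR : ∀ w ∈ W.car, R w ∈ D ∧ lam • R w - T (R w) = w)
    (hRinv : ∀ d ∈ D, R (lam • d - T d) = d) (hRW : BoundedMap W W R)
    {u : ℕ → Z} {x y : Z} (hu : ∀ n, u n ∈ W.car ∧ u n ∈ D ∧ T (u n) ∈ W.car)
    (hx : x ∈ W.car) (hy : y ∈ W.car)
    (hux : Tendsto (fun n => W.N (u n - x)) atTop (nhds 0))
    (huy : Tendsto (fun n => W.N (T (u n) - y)) atTop (nhds 0)) : x ∈ D ∧ T x = y := by
  obtain ⟨M, hM⟩ := hRW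
  have hw : lam • x - y ∈ W.car := W.sub_mem (W.smul_mem lam hx) hy
  have hv : ∀ n, lam • (u n - x) - (T (u n) - y) ∈ W.car := fun n =>
    W.sub_mem (W.smul_mem lam (W.sub_mem (hu n).1 hx)) (W.sub_mem (hu n).2.2 hy)
  have hdiff : ∀ n, u n - R (lam • x - y) = R (lam • (u n - x) - (T (u n) - y)) := by
    intro n
    rw [show lam • (u n - x) - (T (u n) - y) = (lam • u n - T (u n)) - (lam • x - y) by module,
      map_sub R (lam • u n - T (u n)), hRinv _ (hu n).2.1]
  have hv0 : Tendsto (fun n => W.N (lam • (u n - x) - (T (u n) - y))) atTop (nhds 0) := by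
    refine squeeze_zero (fun n => W.nonneg _) (fun n => W.N_smul_sub_le lam
      (W.sub_mem (hu n).1 hx) (W.sub_mem (hu n).2.2 hy)) ?_
    simpa using (hux.const_mul ‖lam‖).add huy
  have hlim : Tendsto (fun n => W.N (u n - R (lam • x - y))) atTop (nhds 0) := by
    refine squeeze_zero (fun n => W.nonneg _) (fun n => (hdiff n).symm ▸ (hM _ (hv n)).2) ?_
    simpa using hv0.const_mul M
  have hxR : x = R (lam • x - y) :=
    W.eq_of_tendsto (fun n => (hu n).1) hx (hM _ hw).1 hux hlim
  obtain ⟨hxD, hTx⟩ := hR _ hw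
  rw [← hxR] at hxD hTx
  exact ⟨hxD, sub_right_injective hTx⟩

theorem mem_and_le_of_resolvent (W V : NSpace Z) {D : Set Z} {T R : Z → Z} {lam : ℂ} {M : ℝ}
    (hM : 0 ≤ M) (hR : ∀ w ∈ W.car, R w ∈ V.car ∧ V.N (R w) ≤ M * W.N w)
    (hRinv : ∀ d ∈ D, R (lam • d - T d) = d) {z : Z} (hz : z ∈ W.car) (hzD : z ∈ D)
    (hTz : T z ∈ W.car) : z ∈ V.car ∧ V.N z ≤ M * (‖lam‖ + 1) * (W.N z + W.N (T z)) := by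
  obtain ⟨hmem, hle⟩ := hR _ (W.sub_mem (W.smul_mem lam hz) hTz)
  rw [hRinv z hzD] at hmem hle
  refine ⟨hmem, hle.trans ?_⟩
  calc M * W.N (lam • z - T z) ≤ M * (‖lam‖ * W.N z + W.N (T z)) := by
        gcongr; exact W.N_smul_sub_le lam hz hTz
    _ ≤ M * (‖lam‖ + 1) * (W.N z + W.N (T z)) := by
        rw [mul_assoc]
        gcongr
        nlinarith [W.nonneg z, mul_nonneg (norm_nonneg lam) (W.nonneg (T z))]

theorem eq_domain_of_resolvent (W V : NSpace Z) {D : Set Z} {T R : Z → Z} {lam : ℂ}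
    (hVW : BoundedMap V W id) (hVD : ∀ z ∈ V.car, z ∈ D) (hT : BoundedMap V W T)
    (hR : BoundedMap W V R) (hRinv : ∀ d ∈ D, R (lam • d - T d) = d) :
    (∀ z, z ∈ V.car ↔ z ∈ W.car ∧ z ∈ D ∧ T z ∈ W.car) ∧
      ∃ c : ℝ, 0 < c ∧ ∀ z ∈ V.car,
        V.N z ≤ c * (W.N z + W.N (T z)) ∧ W.N z + W.N (T z) ≤ c * V.N z := by
  obtain ⟨MI, hMI⟩ := hVW
  obtain ⟨MT, hMT⟩ := hT
  obtain ⟨MR, hMR0, hMR⟩ := hR.exists_nonneg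
  have hback := fun z (hz : z ∈ W.car) (hzD : z ∈ D) (hTz : T z ∈ W.car) =>
    mem_and_le_of_resolvent W V hMR0 hMR hRinv hz hzD hTz
  refine ⟨fun z => ⟨fun hz => ⟨(hMI z hz).1, hVD z hz, (hMT z hz).1⟩,
    fun ⟨hz, hzD, hTz⟩ => (hback z hz hzD hTz).1⟩, ?_⟩
  set c := max (max (MI + MT) (MR * (‖lam‖ + 1))) 1
  refine ⟨c, lt_of_lt_of_le one_pos (le_max_right _ _), fun z hz => ⟨?_, ?_⟩⟩
  · refine (hback z (hMI z hz).1 (hVD z hz) (hMT z hz).1).2.trans ?_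
    gcongr
    · exact add_nonneg (W.nonneg z) (W.nonneg (T z))
    · exact (le_max_right _ _).trans (le_max_left _ _)
  · calc W.N z + W.N (T z) ≤ MI * V.N z + MT * V.N z := add_le_add (hMI z hz).2 (hMT z hz).2
      _ = (MI + MT) * V.N z := by ring
      _ ≤ c * V.N z := by
        gcongr
        · exact V.nonneg z
        · exact (le_max_left _ _).trans (le_max_left _ _)

section GraphNorm

variable {X : NSpace Z} {D : Set Z} {T : Z → Z}

theorem exists_le_graphNorm (hD : D ⊆ X.car) :
    ∃ M : ℝ, ∀ a ∈ D, a ∈ X.car ∧ X.N a ≤ M * (X.N a + X.N (T a)) :=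
  ⟨1, fun a ha => ⟨hD ha, by rw [one_mul]; exact le_add_of_nonneg_right (X.nonneg _)⟩⟩

theorem exists_le_graphNorm_of_eqOn (hT : ∀ x ∈ D, T x ∈ X.car) {S : Z → Z}
    (hS : ∀ x ∈ D, S x = T x) :
    ∃ M : ℝ, ∀ a ∈ D, S a ∈ X.car ∧ X.N (S a) ≤ M * (X.N a + X.N (T a)) :=
  ⟨1, fun a ha => by
    rw [hS a ha, one_mul]; exact ⟨hT a ha, le_add_of_nonneg_left (X.nonneg a)⟩⟩

end GraphNorm

end NSpace

theorem IsIntermediate.subset_sumCar {C₀ C₁ : Set Z} {N₀ N₁ : Z → ℝ} {F : NSpace Z}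
    (h : IsIntermediate C₀ N₀ C₁ N₁ F) : F.car ⊆ sumCar C₀ C₁ := by
  obtain ⟨_, hc⟩ := h.2
  exact fun z hz => (hc z hz).1

section SumSpace

variable {C₀ C₁ : Set Z} {N₀ N₁ : Z → ℝ}

theorem sumN_map_le (hN₀ : ∀ x, 0 ≤ N₀ x) (hN₁ : ∀ x, 0 ≤ N₁ x) (S : Z →ₗ[ℂ] Z) {M : ℝ}
    (hM : 0 ≤ M) (hS₀ : ∀ a ∈ C₀, S a ∈ C₀ ∧ N₀ (S a) ≤ M * N₀ a)
    (hS₁ : ∀ b ∈ C₁, S b ∈ C₁ ∧ N₁ (S b) ≤ M * N₁ b) {z : Z} (hz : z ∈ sumCar C₀ C₁) :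
    sumN C₀ N₀ C₁ N₁ (S z) ≤ M * sumN C₀ N₀ C₁ N₁ z := by
  have hsum_le : ∀ a ∈ C₀, ∀ b ∈ C₁, sumN C₀ N₀ C₁ N₁ (a + b) ≤ N₀ a + N₁ b := by
    refine fun a ha b hb => csInf_le ⟨0, ?_⟩ ⟨a, ha, b, hb, rfl, rfl⟩
    rintro r ⟨a', -, b', -, -, rfl⟩
    exact add_nonneg (hN₀ a') (hN₁ b')
  obtain ⟨a, ha, b, hb, rfl⟩ := hz
  conv_rhs => rw [← smul_eq_mul, sumN, ← Real.sInf_smul_of_nonneg hM]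
  refine le_csInf ⟨_, _, ⟨a, ha, b, hb, rfl, rfl⟩, rfl⟩ ?_
  rintro _ ⟨_, ⟨a', ha', b', hb', hab, rfl⟩, rfl⟩
  simp only [hab, map_add, smul_eq_mul, mul_add]
  exact (hsum_le _ (hS₀ a' ha').1 _ (hS₁ b' hb').1).trans
    (add_le_add (hS₀ a' ha').2 (hS₁ b' hb').2)

end SumSpace

structure IsLinearOn (C : Set Z) (f : Z → Z) : Prop where
  zero_mem : (0 : Z) ∈ C
  add : ∀ x ∈ C, ∀ y ∈ C, x + y ∈ C ∧ f (x + y) = f x + f y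
  smul : ∀ c : ℂ, ∀ x ∈ C, c • x ∈ C ∧ f (c • x) = c • f x

namespace IsLinearOn

variable {C C₀ C₁ : Set Z} {f f₀ f₁ : Z → Z}

def toLinearPMap (h : IsLinearOn C f) : Z →ₗ.[ℂ] Z where
  domain :=
    { carrier := C
      zero_mem' := h.zero_mem
      add_mem' := fun hx hy => (h.add _ hx _ hy).1
      smul_mem' := fun c _ hx => (h.smul c _ hx).1 }
  toFun :=
    { toFun := fun x => f x
      map_add' := fun x y => (h.add _ x.2 _ y.2).2
      map_smul' := fun c x => (h.smul c _ x.2).2 }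

-- The interpolation property is stated for linear maps on all of `Z`, so the glued map on
-- `C₀ + C₁` is extended to `Z` by linear algebra.
theorem exists_linearMap_extend (h₀ : IsLinearOn C₀ f₀) (h₁ : IsLinearOn C₁ f₁)
    (hcons : ∀ x ∈ C₀ ∩ C₁, f₀ x = f₁ x) :
    ∃ S : Z →ₗ[ℂ] Z, (∀ x ∈ C₀, S x = f₀ x) ∧ ∀ x ∈ C₁, S x = f₁ x := by
  have hagree : ∀ (x : h₀.toLinearPMap.domain) (y : h₁.toLinearPMap.domain),
      (x : Z) = y → h₀.toLinearPMap x = h₁.toLinearPMap y := by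
    rintro ⟨x, hx⟩ ⟨y, hy⟩ (rfl : x = y)
    exact hcons x ⟨hx, hy⟩
  set F := h₀.toLinearPMap.sup h₁.toLinearPMap hagree
  obtain ⟨S, hS⟩ := LinearMap.exists_extend F.toFun
  have hSF : ∀ z : F.domain, S z = F z := fun z => LinearMap.congr_fun hS z
  refine ⟨S, fun x hx => ?_, fun x hx => ?_⟩
  · exact (hSF ⟨x, Submodule.mem_sup_left hx⟩).trans
      ((h₀.toLinearPMap.left_le_sup _ hagree).2 (x := ⟨x, hx⟩) rfl).symm
  · exact (hSF ⟨x, Submodule.mem_sup_right hx⟩).trans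
      ((h₀.toLinearPMap.right_le_sup _ hagree).2 (x := ⟨x, hx⟩) rfl).symm

end IsLinearOn

structure IsResolvent (X : NSpace Z) (D : Set Z) (T R : Z → Z) (lam : ℂ) : Prop where
  solves : ∀ x ∈ X.car, R x ∈ D ∧ lam • R x - T (R x) = x
  left_inv : ∀ d ∈ D, R (lam • d - T d) = d
  bounded : ∃ M : ℝ, ∀ x ∈ X.car, X.N (R x) ≤ M * X.N x

namespace IsResolvent

variable {X : NSpace Z} {D : Set Z} {T R : Z → Z} {lam : ℂ}

theorem isLinearOn_domain (hR : IsResolvent X D T R lam)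
    (hadd : ∀ x ∈ D, ∀ y ∈ D, x + y ∈ D ∧ T (x + y) = T x + T y)
    (hsmul : ∀ c : ℂ, ∀ x ∈ D, c • x ∈ D ∧ T (c • x) = c • T x) : IsLinearOn D T :=
  ⟨by simpa using (hsmul 0 _ (hR.solves 0 X.zero_mem).1).1, hadd, hsmul⟩

theorem apply_eq (hR : IsResolvent X D T R lam) {d x : Z} (hd : d ∈ D)
    (h : lam • d - T d = x) : R x = d :=
  h ▸ hR.left_inv d hd

theorem isLinearOn (hR : IsResolvent X D T R lam) (hT : IsLinearOn D T) :
    IsLinearOn X.car R where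
  zero_mem := X.zero_mem
  add x hx y hy := by
    obtain ⟨hRx, hx'⟩ := hR.solves x hx
    obtain ⟨hRy, hy'⟩ := hR.solves y hy
    obtain ⟨hmem, hTadd⟩ := hT.add _ hRx _ hRy
    refine ⟨X.add_mem hx hy, hR.apply_eq hmem ?_⟩
    rw [hTadd]
    linear_combination (norm := module) hx' + hy'
  smul c x hx := by
    obtain ⟨hRx, hx'⟩ := hR.solves x hx
    obtain ⟨hmem, hTsmul⟩ := hT.smul c _ hRx
    refine ⟨X.smul_mem c hx, hR.apply_eq hmem ?_⟩
    rw [hTsmul]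
    linear_combination (norm := module) c • hx'

theorem exists_nonneg_bound (hR : IsResolvent X D T R lam) :
    ∃ M : ℝ, 0 ≤ M ∧ ∀ x ∈ X.car, X.N (R x) ≤ M * X.N x := by
  obtain ⟨M, hM⟩ := hR.bounded
  exact ⟨max M 0, le_max_right _ _, fun x hx =>
    (hM x hx).trans (by gcongr; exacts [X.nonneg x, le_max_left _ _])⟩

theorem exists_graphNorm_bound (hR : IsResolvent X D T R lam) (hD : D ⊆ X.car) {S : Z → Z}
    (hS : ∀ x ∈ X.car, S x = R x) :
    ∃ M : ℝ, ∀ x ∈ X.car, S x ∈ D ∧ X.N (S x) + X.N (T (S x)) ≤ M * X.N x := by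
  obtain ⟨M, hM0, hM⟩ := hR.exists_nonneg_bound
  refine ⟨(1 + ‖lam‖) * M + 1, fun x hx => ?_⟩
  obtain ⟨hRx, hx'⟩ := hR.solves x hx
  rw [hS x hx]
  have hTR : X.N (T (R x)) ≤ ‖lam‖ * X.N (R x) + X.N x := by
    rw [show T (R x) = lam • R x - x by linear_combination (norm := module) -hx']
    exact X.N_smul_sub_le lam (hD hRx) hx
  refine ⟨hRx, ?_⟩
  calc X.N (R x) + X.N (T (R x)) ≤ (1 + ‖lam‖) * X.N (R x) + X.N x := by linarith
    _ ≤ (1 + ‖lam‖) * (M * X.N x) + X.N x := by gcongr; exact hM x hx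
    _ = ((1 + ‖lam‖) * M + 1) * X.N x := by ring

end IsResolvent

section Couple

variable {X₀ X₁ : NSpace Z} {D₀ D₁ : Set Z} {A₀ A₁ A R₀ R₁ : Z → Z} {lam : ℂ}

theorem smul_sub_add_eq (hA : ∀ a ∈ D₀, ∀ b ∈ D₁, A (a + b) = A₀ a + A₁ b) {a b : Z}
    (ha : a ∈ D₀) (hb : b ∈ D₁) :
    lam • (a + b) - A (a + b) = (lam • a - A₀ a) + (lam • b - A₁ b) := by
  rw [hA a ha b hb]
  module

theorem smul_sub_mem_sumCar (hD₀ : D₀ ⊆ X₀.car) (hD₁ : D₁ ⊆ X₁.car)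
    (hA₀ : ∀ x ∈ D₀, A₀ x ∈ X₀.car) (hA₁ : ∀ x ∈ D₁, A₁ x ∈ X₁.car)
    (hA : ∀ a ∈ D₀, ∀ b ∈ D₁, A (a + b) = A₀ a + A₁ b) :
    ∀ d ∈ sumCar D₀ D₁, lam • d - A d ∈ sumCar X₀.car X₁.car := by
  rintro _ ⟨a, ha, b, hb, rfl⟩
  exact ⟨_, X₀.sub_mem (X₀.smul_mem lam (hD₀ ha)) (hA₀ a ha),
    _, X₁.sub_mem (X₁.smul_mem lam (hD₁ hb)) (hA₁ b hb), smul_sub_add_eq hA ha hb⟩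

namespace IsResolvent

variable {S : Z →ₗ[ℂ] Z}

theorem solves_sum (res₀ : IsResolvent X₀ D₀ A₀ R₀ lam) (res₁ : IsResolvent X₁ D₁ A₁ R₁ lam)
    (hS₀ : ∀ x ∈ X₀.car, S x = R₀ x) (hS₁ : ∀ x ∈ X₁.car, S x = R₁ x)
    (hA : ∀ a ∈ D₀, ∀ b ∈ D₁, A (a + b) = A₀ a + A₁ b) :
    ∀ z ∈ sumCar X₀.car X₁.car, S z ∈ sumCar D₀ D₁ ∧ lam • S z - A (S z) = z := by
  rintro _ ⟨x₀, hx₀, x₁, hx₁, rfl⟩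
  obtain ⟨hRx₀, hx₀'⟩ := res₀.solves x₀ hx₀
  obtain ⟨hRx₁, hx₁'⟩ := res₁.solves x₁ hx₁
  rw [map_add, hS₀ x₀ hx₀, hS₁ x₁ hx₁, smul_sub_add_eq hA hRx₀ hRx₁, hx₀', hx₁']
  exact ⟨⟨_, hRx₀, _, hRx₁, rfl⟩, rfl⟩

theorem left_inv_sum (res₀ : IsResolvent X₀ D₀ A₀ R₀ lam)
    (res₁ : IsResolvent X₁ D₁ A₁ R₁ lam) (hD₀ : D₀ ⊆ X₀.car) (hD₁ : D₁ ⊆ X₁.car)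
    (hA₀ : ∀ x ∈ D₀, A₀ x ∈ X₀.car) (hA₁ : ∀ x ∈ D₁, A₁ x ∈ X₁.car)
    (hS₀ : ∀ x ∈ X₀.car, S x = R₀ x) (hS₁ : ∀ x ∈ X₁.car, S x = R₁ x)
    (hA : ∀ a ∈ D₀, ∀ b ∈ D₁, A (a + b) = A₀ a + A₁ b) :
    ∀ d ∈ sumCar D₀ D₁, S (lam • d - A d) = d := by
  rintro _ ⟨a, ha, b, hb, rfl⟩
  rw [smul_sub_add_eq hA ha hb, map_add,
    hS₀ _ (X₀.sub_mem (X₀.smul_mem lam (hD₀ ha)) (hA₀ a ha)),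
    hS₁ _ (X₁.sub_mem (X₁.smul_mem lam (hD₁ hb)) (hA₁ b hb)),
    res₀.left_inv a ha, res₁.left_inv b hb]

theorem mem_resolventSet_sum (res₀ : IsResolvent X₀ D₀ A₀ R₀ lam)
    (res₁ : IsResolvent X₁ D₁ A₁ R₁ lam) (hD₀ : D₀ ⊆ X₀.car) (hD₁ : D₁ ⊆ X₁.car)
    (hS₀ : ∀ x ∈ X₀.car, S x = R₀ x) (hS₁ : ∀ x ∈ X₁.car, S x = R₁ x)
    (hsolve : ∀ z ∈ sumCar X₀.car X₁.car, S z ∈ sumCar D₀ D₁ ∧ lam • S z - A (S z) = z)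
    (hinv : ∀ d ∈ sumCar D₀ D₁, S (lam • d - A d) = d)
    (hrange : ∀ d ∈ sumCar D₀ D₁, lam • d - A d ∈ sumCar X₀.car X₁.car) :
    (∀ z ∈ sumCar X₀.car X₁.car, ∃ d ∈ sumCar D₀ D₁, lam • d - A d = z ∧
        ∀ d' ∈ sumCar D₀ D₁, lam • d' - A d' = z → d' = d) ∧
      ∃ c : ℝ, ∀ d ∈ sumCar D₀ D₁,
        sumN X₀.car X₀.N X₁.car X₁.N d ≤ c * sumN X₀.car X₀.N X₁.car X₁.N (lam • d - A d) := by
  refine ⟨fun z hz => ⟨S z, (hsolve z hz).1, (hsolve z hz).2, fun d hd hdz => ?_⟩, ?_⟩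
  · rw [← hdz, hinv d hd]
  obtain ⟨M₀, hM₀0, hM₀⟩ := res₀.exists_nonneg_bound
  obtain ⟨M₁, hM₁0, hM₁⟩ := res₁.exists_nonneg_bound
  refine ⟨max M₀ M₁, fun d hd => ?_⟩
  conv_lhs => rw [← hinv d hd]
  refine sumN_map_le X₀.nonneg X₁.nonneg S (le_max_of_le_left hM₀0) (fun a ha => ?_)
    (fun b hb => ?_) (hrange d hd)
  · rw [hS₀ a ha]
    exact ⟨hD₀ (res₀.solves a ha).1,
      (hM₀ a ha).trans (by gcongr; exacts [X₀.nonneg a, le_max_left _ _])⟩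
  · rw [hS₁ b hb]
    exact ⟨hD₁ (res₁.solves b hb).1,
      (hM₁ b hb).trans (by gcongr; exacts [X₁.nonneg b, le_max_right _ _])⟩

end IsResolvent

end Couple

theorem statement17_general
    (X₀ X₁ : NSpace Z) (D₀ D₁ : Set Z) (A₀ A₁ A : Z → Z) (lam : ℂ)
    (hD₀ : D₀ ⊆ X₀.car) (hD₁ : D₁ ⊆ X₁.car)
    -- the `A_j` are linear operators `D_j → X_j`
    (hA₀maps : ∀ x ∈ D₀, A₀ x ∈ X₀.car) (hA₁maps : ∀ x ∈ D₁, A₁ x ∈ X₁.car)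
    (hD₀lin : ∀ x ∈ D₀, ∀ y ∈ D₀, x + y ∈ D₀ ∧ A₀ (x + y) = A₀ x + A₀ y)
    (hD₀smul : ∀ (c : ℂ), ∀ x ∈ D₀, c • x ∈ D₀ ∧ A₀ (c • x) = c • A₀ x)
    (hD₁lin : ∀ x ∈ D₁, ∀ y ∈ D₁, x + y ∈ D₁ ∧ A₁ (x + y) = A₁ x + A₁ y)
    (hD₁smul : ∀ (c : ℂ), ∀ x ∈ D₁, c • x ∈ D₁ ∧ A₁ (c • x) = c • A₁ x)
    -- consistency of `A₀` and `A₁`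
    (hcons : ∀ x, x ∈ D₀ ∩ D₁ → A₀ x = A₁ x)
    -- `λ ∈ ρ(A₀) ∩ ρ(A₁)` with consistent resolvents `R₀, R₁`
    (R₀ R₁ : Z → Z)
    (hR₀ : ∀ x ∈ X₀.car, R₀ x ∈ D₀ ∧ lam • R₀ x - A₀ (R₀ x) = x)
    (hR₀inv : ∀ d ∈ D₀, R₀ (lam • d - A₀ d) = d)
    (hR₀bdd : ∃ M : ℝ, ∀ x ∈ X₀.car, X₀.N (R₀ x) ≤ M * X₀.N x)
    (hR₁ : ∀ x ∈ X₁.car, R₁ x ∈ D₁ ∧ lam • R₁ x - A₁ (R₁ x) = x)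
    (hR₁inv : ∀ d ∈ D₁, R₁ (lam • d - A₁ d) = d)
    (hR₁bdd : ∃ M : ℝ, ∀ x ∈ X₁.car, X₁.N (R₁ x) ≤ M * X₁.N x)
    (hRcons : ∀ x ∈ X₀.car ∩ X₁.car, R₀ x = R₁ x)
    -- the sum operator `A` on `D₀ + D₁`
    (hA : ∀ a ∈ D₀, ∀ b ∈ D₁, A (a + b) = A₀ a + A₁ b)
    -- the interpolation functor `F`, through its values on the two couples
    (FX FD : NSpace Z)
    (hFXmid : IsIntermediate X₀.car X₀.N X₁.car X₁.N FX)
    (hFDmid : IsIntermediate D₀ (fun z => X₀.N z + X₀.N (A₀ z))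
      D₁ (fun z => X₁.N z + X₁.N (A₁ z)) FD)
    -- interpolation property: admissible operators `(X₀,X₁) → (D_{A₀},D_{A₁})`
    (hFinterp₁ : ∀ (S : Z →ₗ[ℂ] Z),
      (∃ M : ℝ, ∀ a ∈ X₀.car, S a ∈ D₀ ∧
          X₀.N (S a) + X₀.N (A₀ (S a)) ≤ M * X₀.N a) →
      (∃ M : ℝ, ∀ b ∈ X₁.car, S b ∈ D₁ ∧
          X₁.N (S b) + X₁.N (A₁ (S b)) ≤ M * X₁.N b) →
      ∃ M' : ℝ, ∀ z ∈ FX.car, S z ∈ FD.car ∧ FD.N (S z) ≤ M' * FX.N z)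
    -- interpolation property: admissible operators `(D_{A₀},D_{A₁}) → (X₀,X₁)`
    (hFinterp₂ : ∀ (S : Z →ₗ[ℂ] Z),
      (∃ M : ℝ, ∀ a ∈ D₀, S a ∈ X₀.car ∧
          X₀.N (S a) ≤ M * (X₀.N a + X₀.N (A₀ a))) →
      (∃ M : ℝ, ∀ b ∈ D₁, S b ∈ X₁.car ∧
          X₁.N (S b) ≤ M * (X₁.N b + X₁.N (A₁ b))) →
      ∃ M' : ℝ, ∀ z ∈ FD.car, S z ∈ FX.car ∧ FX.N (S z) ≤ M' * FD.N z) :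
    -- `λ ∈ ρ(A)` on `X₀ + X₁`
    ((∀ z ∈ sumCar X₀.car X₁.car, ∃ d, d ∈ {d' | ∃ a ∈ D₀, ∃ b ∈ D₁, d' = a + b} ∧
        lam • d - A d = z ∧
        ∀ d' ∈ {d'' | ∃ a ∈ D₀, ∃ b ∈ D₁, d'' = a + b},
          lam • d' - A d' = z → d' = d) ∧
      (∃ c : ℝ, ∀ d ∈ {d' | ∃ a ∈ D₀, ∃ b ∈ D₁, d' = a + b},
        sumN X₀.car X₀.N X₁.car X₁.N d ≤ c * sumN X₀.car X₀.N X₁.car X₁.N (lam • d - A d))) ∧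
    -- the part `A_F` of `A` in `FX` is closed
    (∀ (u : ℕ → Z) (x y : Z),
      (∀ n, u n ∈ FX.car ∧ (∃ a ∈ D₀, ∃ b ∈ D₁, u n = a + b) ∧ A (u n) ∈ FX.car) →
      x ∈ FX.car → y ∈ FX.car →
      Tendsto (fun n => FX.N (u n - x)) atTop (nhds 0) →
      Tendsto (fun n => FX.N (A (u n) - y)) atTop (nhds 0) →
      (∃ a ∈ D₀, ∃ b ∈ D₁, x = a + b) ∧ A x = y) ∧
    -- `F(D_{A₀}, D_{A₁}) = D_{A_F}` with equivalence of (graph) norms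
    ((∀ z : Z, z ∈ FD.car ↔
        (z ∈ FX.car ∧ (∃ a ∈ D₀, ∃ b ∈ D₁, z = a + b) ∧ A z ∈ FX.car)) ∧
      ∃ c : ℝ, 0 < c ∧ ∀ z ∈ FD.car,
        FD.N z ≤ c * (FX.N z + FX.N (A z)) ∧
        FX.N z + FX.N (A z) ≤ c * FD.N z) := by
  have res₀ : IsResolvent X₀ D₀ A₀ R₀ lam := ⟨hR₀, hR₀inv, hR₀bdd⟩
  have res₁ : IsResolvent X₁ D₁ A₁ R₁ lam := ⟨hR₁, hR₁inv, hR₁bdd⟩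
  have lin₀ := res₀.isLinearOn_domain hD₀lin hD₀smul
  have lin₁ := res₁.isLinearOn_domain hD₁lin hD₁smul
  obtain ⟨R, hR₀R, hR₁R⟩ :=
    (res₀.isLinearOn lin₀).exists_linearMap_extend (res₁.isLinearOn lin₁) hRcons
  obtain ⟨SA, hSA₀, hSA₁⟩ := lin₀.exists_linearMap_extend lin₁ hcons
  have hSA : ∀ z ∈ FD.car, SA z = A z := by
    intro z hz
    obtain ⟨a, ha, b, hb, rfl⟩ := hFDmid.subset_sumCar hz
    rw [map_add, hSA₀ a ha, hSA₁ b hb, hA a ha b hb]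
  have hsolve := res₀.solves_sum res₁ hR₀R hR₁R hA
  have hinv := res₀.left_inv_sum res₁ hD₀ hD₁ hA₀maps hA₁maps hR₀R hR₁R hA
  have hRFD : NSpace.BoundedMap FX FD R :=
    hFinterp₁ R (res₀.exists_graphNorm_bound hD₀ hR₀R) (res₁.exists_graphNorm_bound hD₁ hR₁R)
  have hFDFX : NSpace.BoundedMap FD FX id :=
    hFinterp₂ LinearMap.id (NSpace.exists_le_graphNorm hD₀) (NSpace.exists_le_graphNorm hD₁)
  have hSAFD : NSpace.BoundedMap FD FX SA :=
    hFinterp₂ SA (NSpace.exists_le_graphNorm_of_eqOn hA₀maps hSA₀)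
      (NSpace.exists_le_graphNorm_of_eqOn hA₁maps hSA₁)
  refine ⟨res₀.mem_resolventSet_sum res₁ hD₀ hD₁ hR₀R hR₁R hsolve hinv
      (smul_sub_mem_sumCar hD₀ hD₁ hA₀maps hA₁maps hA),
    fun u x y hu hx hy => FX.closed_of_resolvent (fun w hw => hsolve w (hFXmid.subset_sumCar hw))
      hinv (hRFD.comp hFDFX) hu hx hy,
    FX.eq_domain_of_resolvent FD hFDFX (fun z hz => hFDmid.subset_sumCar hz) (hSAFD.congr hSA)
      hRFD hinv⟩

/-- Proposition 4.1 of the paper.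
Let `(X₀,X₁)` be a Banach couple (realized inside an ambient space `Z`) and let `A_j`
be a closed operator on `X_j` with domain `D_j` (`j = 0,1`), such that `A₀ = A₁` on
`D₀ ∩ D₁`, and such that for some `λ ∈ ρ(A₀) ∩ ρ(A₁)` the resolvents `(λ - A_j)⁻¹ = R_j`
coincide on `X₀ ∩ X₁`.  Let `A` be the (unique, well-defined) linear operator with
domain `D₀ + D₁ ⊆ X₀ + X₁` with `A(x₀ + x₁) = A₀x₀ + A₁x₁`.  Then for every
interpolation functor `F` — encoded by its values `FX = F(X₀,X₁)` and
`FD = F(D_{A₀}, D_{A₁})` on the two relevant couples, together with the interpolation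
property for admissible operators between them — one has: `λ ∈ ρ(A)`; the part `A_F` of
`A` in `FX` is closed; and `F(D_{A₀}, D_{A₁}) = D_{A_F}` up to equivalence of norms
(with `D_{A_F}` carrying the graph norm). -/
theorem statement17
    (X₀ X₁ : NSpace Z) (D₀ D₁ : Set Z) (A₀ A₁ A : Z → Z) (lam : ℂ)
    (hD₀ : D₀ ⊆ X₀.car) (hD₁ : D₁ ⊆ X₁.car)
    -- the `A_j` are linear operators `D_j → X_j`
    (hA₀maps : ∀ x ∈ D₀, A₀ x ∈ X₀.car) (hA₁maps : ∀ x ∈ D₁, A₁ x ∈ X₁.car)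
    (hD₀lin : ∀ x ∈ D₀, ∀ y ∈ D₀, x + y ∈ D₀ ∧ A₀ (x + y) = A₀ x + A₀ y)
    (hD₀smul : ∀ (c : ℂ), ∀ x ∈ D₀, c • x ∈ D₀ ∧ A₀ (c • x) = c • A₀ x)
    (hD₁lin : ∀ x ∈ D₁, ∀ y ∈ D₁, x + y ∈ D₁ ∧ A₁ (x + y) = A₁ x + A₁ y)
    (hD₁smul : ∀ (c : ℂ), ∀ x ∈ D₁, c • x ∈ D₁ ∧ A₁ (c • x) = c • A₁ x)
    -- closedness of `A₀` and `A₁`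
    (hA₀closed : ∀ (u : ℕ → Z) (x y : Z), (∀ n, u n ∈ D₀) → x ∈ X₀.car → y ∈ X₀.car →
      Tendsto (fun n => X₀.N (u n - x)) atTop (nhds 0) →
      Tendsto (fun n => X₀.N (A₀ (u n) - y)) atTop (nhds 0) →
      x ∈ D₀ ∧ A₀ x = y)
    (hA₁closed : ∀ (u : ℕ → Z) (x y : Z), (∀ n, u n ∈ D₁) → x ∈ X₁.car → y ∈ X₁.car →
      Tendsto (fun n => X₁.N (u n - x)) atTop (nhds 0) →
      Tendsto (fun n => X₁.N (A₁ (u n) - y)) atTop (nhds 0) →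
      x ∈ D₁ ∧ A₁ x = y)
    -- consistency of `A₀` and `A₁`
    (hcons : ∀ x, x ∈ D₀ ∩ D₁ → A₀ x = A₁ x)
    -- `λ ∈ ρ(A₀) ∩ ρ(A₁)` with consistent resolvents `R₀, R₁`
    (R₀ R₁ : Z → Z)
    (hR₀ : ∀ x ∈ X₀.car, R₀ x ∈ D₀ ∧ lam • R₀ x - A₀ (R₀ x) = x)
    (hR₀inv : ∀ d ∈ D₀, R₀ (lam • d - A₀ d) = d)
    (hR₀bdd : ∃ M : ℝ, ∀ x ∈ X₀.car, X₀.N (R₀ x) ≤ M * X₀.N x)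
    (hR₁ : ∀ x ∈ X₁.car, R₁ x ∈ D₁ ∧ lam • R₁ x - A₁ (R₁ x) = x)
    (hR₁inv : ∀ d ∈ D₁, R₁ (lam • d - A₁ d) = d)
    (hR₁bdd : ∃ M : ℝ, ∀ x ∈ X₁.car, X₁.N (R₁ x) ≤ M * X₁.N x)
    (hRcons : ∀ x ∈ X₀.car ∩ X₁.car, R₀ x = R₁ x)
    -- the sum operator `A` on `D₀ + D₁`
    (hA : ∀ a ∈ D₀, ∀ b ∈ D₁, A (a + b) = A₀ a + A₁ b)
    -- the interpolation functor `F`, through its values on the two couples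
    (FX FD : NSpace Z)
    (hFXmid : IsIntermediate X₀.car X₀.N X₁.car X₁.N FX)
    (hFDmid : IsIntermediate D₀ (fun z => X₀.N z + X₀.N (A₀ z))
      D₁ (fun z => X₁.N z + X₁.N (A₁ z)) FD)
    -- interpolation property: admissible operators `(X₀,X₁) → (D_{A₀},D_{A₁})`
    (hFinterp₁ : ∀ (S : Z →ₗ[ℂ] Z),
      (∃ M : ℝ, ∀ a ∈ X₀.car, S a ∈ D₀ ∧
          X₀.N (S a) + X₀.N (A₀ (S a)) ≤ M * X₀.N a) →
      (∃ M : ℝ, ∀ b ∈ X₁.car, S b ∈ D₁ ∧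
          X₁.N (S b) + X₁.N (A₁ (S b)) ≤ M * X₁.N b) →
      ∃ M' : ℝ, ∀ z ∈ FX.car, S z ∈ FD.car ∧ FD.N (S z) ≤ M' * FX.N z)
    -- interpolation property: admissible operators `(D_{A₀},D_{A₁}) → (X₀,X₁)`
    (hFinterp₂ : ∀ (S : Z →ₗ[ℂ] Z),
      (∃ M : ℝ, ∀ a ∈ D₀, S a ∈ X₀.car ∧
          X₀.N (S a) ≤ M * (X₀.N a + X₀.N (A₀ a))) →
      (∃ M : ℝ, ∀ b ∈ D₁, S b ∈ X₁.car ∧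
          X₁.N (S b) ≤ M * (X₁.N b + X₁.N (A₁ b))) →
      ∃ M' : ℝ, ∀ z ∈ FD.car, S z ∈ FX.car ∧ FX.N (S z) ≤ M' * FD.N z) :
    -- `λ ∈ ρ(A)` on `X₀ + X₁`
    ((∀ z ∈ sumCar X₀.car X₁.car, ∃ d, d ∈ {d' | ∃ a ∈ D₀, ∃ b ∈ D₁, d' = a + b} ∧
        lam • d - A d = z ∧
        ∀ d' ∈ {d'' | ∃ a ∈ D₀, ∃ b ∈ D₁, d'' = a + b},
          lam • d' - A d' = z → d' = d) ∧
      (∃ c : ℝ, ∀ d ∈ {d' | ∃ a ∈ D₀, ∃ b ∈ D₁, d' = a + b},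
        sumN X₀.car X₀.N X₁.car X₁.N d ≤ c * sumN X₀.car X₀.N X₁.car X₁.N (lam • d - A d))) ∧
    -- the part `A_F` of `A` in `FX` is closed
    (∀ (u : ℕ → Z) (x y : Z),
      (∀ n, u n ∈ FX.car ∧ (∃ a ∈ D₀, ∃ b ∈ D₁, u n = a + b) ∧ A (u n) ∈ FX.car) →
      x ∈ FX.car → y ∈ FX.car →
      Tendsto (fun n => FX.N (u n - x)) atTop (nhds 0) →
      Tendsto (fun n => FX.N (A (u n) - y)) atTop (nhds 0) →
      (∃ a ∈ D₀, ∃ b ∈ D₁, x = a + b) ∧ A x = y) ∧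
    -- `F(D_{A₀}, D_{A₁}) = D_{A_F}` with equivalence of (graph) norms
    ((∀ z : Z, z ∈ FD.car ↔
        (z ∈ FX.car ∧ (∃ a ∈ D₀, ∃ b ∈ D₁, z = a + b) ∧ A z ∈ FX.car)) ∧
      ∃ c : ℝ, 0 < c ∧ ∀ z ∈ FD.car,
        FD.N z ≤ c * (FX.N z + FX.N (A z)) ∧
        FX.N z + FX.N (A z) ≤ c * FD.N z) :=
  statement17_general X₀ X₁ D₀ D₁ A₀ A₁ A lam hD₀ hD₁ hA₀maps hA₁maps hD₀lin hD₀smul hD₁lin hD₁smul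
    hcons R₀ R₁ hR₀ hR₀inv hR₀bdd hR₁ hR₁inv hR₁bdd hRcons hA FX FD hFXmid hFDmid hFinterp₁
    hFinterp₂
end
end
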